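/- arXiv:2312.11086 — 8 statements merged into one kernel-verified Lean document; each statement's English description precedes it below -/
import Mathlib

section
/- Every cograph is either bipartite or contains a triangle as a subgraph. -/
/-- A cograph: a graph with no induced path on four vertices (no induced `P4`). -/
def IsCograph {V : Type*} (G : SimpleGraph V) : Prop :=
  ¬ ∃ a b c d : V, a ≠ b ∧ a ≠ c ∧ a ≠ d ∧ b ≠ c ∧ b ≠ d ∧ c ≠ d ∧
    G.Adj a b ∧ G.Adj b c ∧ G.Adj c d ∧ ¬ G.Adj a c ∧ ¬ G.Adj b d ∧ ¬ G.Adj a d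

/-- In a cograph, two distinct non-adjacent reachable vertices have a common neighbor. -/
lemma cograph_common_nbr {V : Type*} {G : SimpleGraph V} (hco : IsCograph G) :
    ∀ {a b : V}, G.Walk a b → a ≠ b → ¬ G.Adj a b → ∃ u, G.Adj a u ∧ G.Adj u b := by
  intro a b w
  induction w with
  | nil => intro h _; exact absurd rfl h
  | @cons a x b h w ih =>
    intro hab hnadj
    by_cases hxb : x = b
    · subst hxb; exact absurd h hnadj
    by_cases haxb : G.Adj x b
    · exact ⟨x, h, haxb⟩
    obtain ⟨u, hxu, hub⟩ := ih hxb haxb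
    by_cases hua : u = a
    · subst hua; exact absurd hub hnadj
    by_cases hau : G.Adj a u
    · exact ⟨u, hau, hub⟩
    exact absurd ⟨a, x, u, b, h.ne, fun e => hua e.symm, hab, hxu.ne, hxb, hub.ne,
      h, hxu, hub, hau, haxb, hnadj⟩ hco

/-- Every cograph is either bipartite (2-colorable) or contains a triangle
(three pairwise adjacent vertices) as a subgraph. -/
theorem stmt1 {V : Type*} (G : SimpleGraph V) (hco : IsCograph G) :
    G.Colorable 2 ∨ ∃ a b c : V, G.Adj a b ∧ G.Adj b c ∧ G.Adj a c := by
  classical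
  by_cases htri : ∃ a b c : V, G.Adj a b ∧ G.Adj b c ∧ G.Adj a c
  · exact Or.inr htri
  push_neg at htri
  left
  set p : V → V := fun v => (G.connectedComponentMk v).out with hp
  have hreach : ∀ v, G.Reachable (p v) v := by
    intro v
    have : G.connectedComponentMk (p v) = G.connectedComponentMk v :=
      (G.connectedComponentMk v).out_eq
    exact (SimpleGraph.ConnectedComponent.eq.mp this)
  have hpeq : ∀ {a b : V}, G.Adj a b → p a = p b := by
    intro a b h
    have : G.connectedComponentMk a = G.connectedComponentMk b :=
      SimpleGraph.ConnectedComponent.sound h.reachable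
    simp only [hp, this]
  refine ⟨SimpleGraph.Coloring.mk
    (fun v => if G.Adj (p v) v then (1 : Fin 2) else 0) ?_⟩
  intro a b hadj heq
  have hpab : p a = p b := hpeq hadj
  by_cases h1 : G.Adj (p a) a
  · -- then also Adj (p b) b
    by_cases h2 : G.Adj (p b) b
    · -- triangle p a, a, b
      rw [hpab] at h1
      exact htri a (p b) b h1.symm h2 hadj
    · simp [h1, h2] at heq
  · by_cases h2 : G.Adj (p b) b
    · simp [h1, h2] at heq
    · -- both non-adjacent to basepoint q
      rw [hpab] at h1
      set q := p b with hq
      by_cases hqa : q = a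
      · exact h2 (by rw [hqa]; exact hadj)
      · by_cases hqb : q = b
        · exact h1 (hqb ▸ hadj.symm)
        · obtain ⟨u, hqu, hua⟩ := cograph_common_nbr hco
            ((hpab ▸ hreach a : G.Reachable q a).some) hqa h1
          obtain ⟨w, hqw, hwb⟩ := cograph_common_nbr hco (hreach b).some hqb h2
          -- derive contradictions
          have huw : u ≠ w := by
            rintro rfl
            exact htri a u b hua.symm hwb hadj
          have hnuw : ¬ G.Adj u w := fun h' => htri u w q h' hqw.symm hqu.symm
          have hnaw : ¬ G.Adj a w := fun h' => htri a w b h' hwb hadj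
          have haq : a ≠ q := fun e => hqa e.symm
          have haw : a ≠ w := by
            rintro rfl
            exact h1 hqw
          exact hco ⟨a, u, q, w, hua.ne', haq, haw, hqu.ne', huw, hqw.ne,
            hua.symm, hqu.symm, hqw, fun h' => h1 h'.symm, hnuw, hnaw⟩
end

section
/- If H is a graph that is not a trivial pattern, then the triangle K3 is a projection of H. -/
/-- `H'` is a projection of `H`: `H'` can be obtained from `H` by deleting vertices and
identifying pairs of nonadjacent vertices.  Equivalently, there is a partial surjection
`f` from the vertices of `H` onto the vertices of `H'` whose classes are independent
sets of `H`, with two vertices of `H'` adjacent iff some pair of preimages is adjacent. -/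
def IsProjection {α β : Type*} (H : SimpleGraph α) (H' : SimpleGraph β) : Prop :=
  ∃ f : α → Option β,
    (∀ b : β, ∃ a : α, f a = some b) ∧
    (∀ a a' : α, ∀ b : β, f a = some b → f a' = some b → ¬ H.Adj a a') ∧
    (∀ b b' : β, H'.Adj b b' ↔ ∃ a a' : α, f a = some b ∧ f a' = some b' ∧ H.Adj a a')

/-- `G` restricted to the vertex set `S` is a complete bipartite graph:
there is a partition of `S` into `A` and `B` such that the edges of `G` are
exactly the pairs with one endpoint in `A` and the other in `B`. -/
def IsCompleteBipartiteOn {V : Type*} (G : SimpleGraph V) (S : Set V) : Prop :=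
  ∃ A B : Set V, Disjoint A B ∧ A ∪ B = S ∧
    ∀ a b : V, G.Adj a b ↔ ((a ∈ A ∧ b ∈ B) ∨ (a ∈ B ∧ b ∈ A))

/-- A trivial pattern: after removing all isolated vertices (i.e. restricting to the
support), the graph is either a complete bipartite graph or has at most two edges. -/
def IsTrivialPattern {V : Type*} (G : SimpleGraph V) : Prop :=
  IsCompleteBipartiteOn G G.support ∨ Nat.card G.edgeSet ≤ 2

lemma proj_aux {V : Type*} (H : SimpleGraph V) (x1 x2 y1 y2 z1 z2 : V)
    (exy : H.Adj x1 y1) (exz : H.Adj x2 z1) (eyz : H.Adj y2 z2)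
    (ix : ¬ H.Adj x1 x2) (iy : ¬ H.Adj y1 y2) (iz : ¬ H.Adj z1 z2)
    (hx1y1 : x1 ≠ y1) (hx1y2 : x1 ≠ y2) (hx2y1 : x2 ≠ y1) (hx2y2 : x2 ≠ y2)
    (hx1z1 : x1 ≠ z1) (hx1z2 : x1 ≠ z2) (hx2z1 : x2 ≠ z1) (hx2z2 : x2 ≠ z2)
    (hy1z1 : y1 ≠ z1) (hy1z2 : y1 ≠ z2) (hy2z1 : y2 ≠ z1) (hy2z2 : y2 ≠ z2) :
    IsProjection H (⊤ : SimpleGraph (Fin 3)) := by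
  classical
  set f : V → Option (Fin 3) := fun v =>
    if v = x1 ∨ v = x2 then some 0 else
    if v = y1 ∨ v = y2 then some 1 else
    if v = z1 ∨ v = z2 then some 2 else none with hf
  have fx : ∀ v, (v = x1 ∨ v = x2) → f v = some 0 := by
    intro v hv; simp only [hf]; rw [if_pos hv]
  have fy : ∀ v, (v = y1 ∨ v = y2) → f v = some 1 := by
    intro v hv
    have hnx : ¬ (v = x1 ∨ v = x2) := by
      rcases hv with rfl | rfl
      · rintro (rfl | rfl); exacts [hx1y1 rfl, hx2y1 rfl]
      · rintro (rfl | rfl); exacts [hx1y2 rfl, hx2y2 rfl]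
    simp only [hf]; rw [if_neg hnx, if_pos hv]
  have fz : ∀ v, (v = z1 ∨ v = z2) → f v = some 2 := by
    intro v hv
    have hnx : ¬ (v = x1 ∨ v = x2) := by
      rcases hv with rfl | rfl
      · rintro (rfl | rfl); exacts [hx1z1 rfl, hx2z1 rfl]
      · rintro (rfl | rfl); exacts [hx1z2 rfl, hx2z2 rfl]
    have hny : ¬ (v = y1 ∨ v = y2) := by
      rcases hv with rfl | rfl
      · rintro (rfl | rfl); exacts [hy1z1 rfl, hy2z1 rfl]
      · rintro (rfl | rfl); exacts [hy1z2 rfl, hy2z2 rfl]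
    simp only [hf]; rw [if_neg hnx, if_neg hny, if_pos hv]
  have key : ∀ v b, f v = some b →
      ((v = x1 ∨ v = x2) ∧ b = 0) ∨ ((v = y1 ∨ v = y2) ∧ b = 1) ∨ ((v = z1 ∨ v = z2) ∧ b = 2) := by
    intro v b h
    simp only [hf] at h
    split_ifs at h with h1 h2 h3
    · exact Or.inl ⟨h1, by simpa using h.symm⟩
    · exact Or.inr (Or.inl ⟨h2, by simpa using h.symm⟩)
    · exact Or.inr (Or.inr ⟨h3, by simpa using h.symm⟩)
  have indep : ∀ a a' (b : Fin 3), f a = some b → f a' = some b → ¬ H.Adj a a' := by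
    intro a a' b h h'
    rcases key a b h with ⟨hv, rfl⟩ | ⟨hv, rfl⟩ | ⟨hv, rfl⟩
    all_goals rcases key a' _ h' with ⟨hv', hb⟩ | ⟨hv', hb⟩ | ⟨hv', hb⟩
    all_goals first | (exact absurd hb (by decide)) | skip
    all_goals rcases hv with rfl | rfl
    all_goals rcases hv' with rfl | rfl
    all_goals first
      | exact H.irrefl
      | exact ix | exact iy | exact iz
      | exact fun hadj => ix hadj.symm
      | exact fun hadj => iy hadj.symm
      | exact fun hadj => iz hadj.symm
  refine ⟨f, ?_, indep, ?_⟩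
  · intro b
    fin_cases b
    · exact ⟨x1, fx x1 (Or.inl rfl)⟩
    · exact ⟨y1, fy y1 (Or.inl rfl)⟩
    · exact ⟨z1, fz z1 (Or.inl rfl)⟩
  · intro b b'
    constructor
    · intro hbb'
      rw [SimpleGraph.top_adj] at hbb'
      fin_cases b <;> fin_cases b'
      · exact absurd rfl hbb'
      · exact ⟨x1, y1, fx x1 (Or.inl rfl), fy y1 (Or.inl rfl), exy⟩
      · exact ⟨x2, z1, fx x2 (Or.inr rfl), fz z1 (Or.inl rfl), exz⟩
      · exact ⟨y1, x1, fy y1 (Or.inl rfl), fx x1 (Or.inl rfl), exy.symm⟩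
      · exact absurd rfl hbb'
      · exact ⟨y2, z2, fy y2 (Or.inr rfl), fz z2 (Or.inr rfl), eyz⟩
      · exact ⟨z1, x2, fz z1 (Or.inl rfl), fx x2 (Or.inr rfl), exz.symm⟩
      · exact ⟨z2, y2, fz z2 (Or.inr rfl), fy y2 (Or.inr rfl), eyz.symm⟩
      · exact absurd rfl hbb'
    · rintro ⟨u, v, hu, hv, huv⟩
      rw [SimpleGraph.top_adj]
      rintro rfl
      exact indep u v b hu hv huv

lemma match_disj {V : Type*} {H : SimpleGraph V} (hm : ∀ x y z : V, H.Adj x y → H.Adj x z → y = z)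
    {a b c d : V} (hab : H.Adj a b) (hcd : H.Adj c d) (hne : s(a, b) ≠ s(c, d)) :
    a ≠ c ∧ a ≠ d ∧ b ≠ c ∧ b ≠ d := by
  refine ⟨?_, ?_, ?_, ?_⟩
  · rintro rfl; exact hne (by rw [hm a b d hab hcd])
  · rintro rfl; exact hne (by rw [hm a b c hab hcd.symm, Sym2.eq_swap])
  · rintro rfl; exact hne (by rw [hm b a d hab.symm hcd, Sym2.eq_swap])
  · rintro rfl; exact hne (by rw [hm b a c hab.symm hcd.symm])

/-- If `H` is a graph that is not a trivial pattern, then the triangle `K₃` is a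
projection of `H`. -/
theorem stmt3 {V : Type*} [Fintype V] (H : SimpleGraph V) (h : ¬ IsTrivialPattern H) :
    IsProjection H (⊤ : SimpleGraph (Fin 3)) := by
  classical
  rw [IsTrivialPattern, not_or] at h
  obtain ⟨hncb, hcard⟩ := h
  push_neg at hcard
  -- Case 1: a triangle
  by_cases hT : ∃ a b c : V, H.Adj a b ∧ H.Adj b c ∧ H.Adj a c
  · obtain ⟨a, b, c, hab, hbc, hac⟩ := hT
    exact proj_aux H a a b b c c hab hac hbc (H.irrefl) (H.irrefl) (H.irrefl)
      hab.ne hab.ne hab.ne hab.ne hac.ne hac.ne hac.ne hac.ne hbc.ne hbc.ne hbc.ne hbc.ne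
  push_neg at hT
  have nT : ∀ a b c : V, H.Adj a b → H.Adj b c → ¬ H.Adj a c := fun a b c h1 h2 h3 =>
    (hT a b c h1 h2) h3
  -- Case 2: an induced P4
  by_cases hP : ∃ a b c d : V, H.Adj a b ∧ H.Adj b c ∧ H.Adj c d ∧
      ¬ H.Adj a c ∧ ¬ H.Adj b d ∧ ¬ H.Adj a d ∧ a ≠ c ∧ b ≠ d
  · obtain ⟨a, b, c, d, hab, hbc, hcd, hac, hbd, had, hac', hbd'⟩ := hP
    exact proj_aux H a d b b c c hab hcd.symm hbc had (H.irrefl) (H.irrefl)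
      hab.ne hab.ne hbd'.symm hbd'.symm hac' hac' hcd.ne.symm hcd.ne.symm hbc.ne hbc.ne hbc.ne hbc.ne
  push_neg at hP
  have nP : ∀ a b c d : V, H.Adj a b → H.Adj b c → H.Adj c d →
      ¬ H.Adj a c → ¬ H.Adj b d → ¬ H.Adj a d → a ≠ c → b = d := by
    intro a b c d h1 h2 h3 h4 h5 h6 h7
    exact hP a b c d h1 h2 h3 h4 h5 h6 h7
  -- Case 3: a cherry plus a far edge
  by_cases hA : ∃ a b b' c d : V, H.Adj a b ∧ H.Adj a b' ∧ H.Adj c d ∧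
      ¬ H.Adj b c ∧ ¬ H.Adj d b' ∧ b ≠ b' ∧ b ≠ d ∧ c ≠ b' ∧ a ≠ c ∧ a ≠ d
  · obtain ⟨a, b, b', c, d, hab, hab', hcd, hbc, hdb', hbb', hbd, hcb', hac, had⟩ := hA
    exact proj_aux H a a b c b' d hab hab' hcd (H.irrefl) hbc (fun h => hdb' h.symm)
      hab.ne hac hab.ne hac hab'.ne had hab'.ne had hbb' hbd hcb' hcd.ne
  push_neg at hA
  have nA : ∀ a b b' c d : V, H.Adj a b → H.Adj a b' → H.Adj c d →
      ¬ H.Adj b c → ¬ H.Adj d b' → b ≠ b' → b ≠ d → c ≠ b' → a ≠ c → a = d := by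
    intro a b b' c d h1 h2 h3 h4 h5 h6 h7 h8 h9
    exact hA a b b' c d h1 h2 h3 h4 h5 h6 h7 h8 h9
  -- Case 4: some vertex of degree ≥ 2 : then H is complete bipartite on its support
  by_cases hdeg : ∃ a b b' : V, H.Adj a b ∧ H.Adj a b' ∧ b ≠ b'
  · exfalso
    obtain ⟨a, b, b', hab, hab', hbb'⟩ := hdeg
    apply hncb
    -- every edge goes between N(b) and N(a)
    have crossEdge : ∀ c d : V, H.Adj c d → (H.Adj b c ∧ H.Adj a d) ∨ (H.Adj a c ∧ H.Adj b d) := by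
      intro c d hcd
      by_cases hca : c = a
      · subst hca; exact Or.inl ⟨hab.symm, hcd⟩
      by_cases hda : d = a
      · subst hda; exact Or.inr ⟨hcd.symm, hab.symm⟩
      by_cases hcb : c = b
      · subst hcb; exact Or.inr ⟨hab, hcd⟩
      by_cases hdb : d = b
      · subst hdb; exact Or.inl ⟨hcd.symm, hab⟩
      by_cases h1 : H.Adj a c
      · refine Or.inr ⟨h1, ?_⟩
        by_contra hbd
        have had : ¬ H.Adj a d := fun hh => nT a c d h1 hcd hh
        exact hcb (nP d c a b hcd.symm h1.symm hab (fun hh => had hh.symm)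
          (fun hh => nT a b c hab hh.symm h1) (fun hh => hbd hh.symm) hda)
      by_cases h2 : H.Adj a d
      · refine Or.inl ⟨?_, h2⟩
        by_contra hbc
        exact hdb (nP c d a b hcd h2.symm hab (fun hh => h1 hh.symm)
          (fun hh => nT a b d hab hh.symm h2) (fun hh => hbc hh.symm) hca)
      by_cases h3 : H.Adj b c
      · exfalso
        exact hdb (nP a b c d hab h3 hcd h1 (fun hh => nT b c d h3 hcd hh) h2
          (fun hh => hca hh.symm)).symm
      by_cases h4 : H.Adj b d
      · exfalso
        exact hcb (nP a b d c hab h4 hcd.symm h2 h3 h1 (fun hh => hda hh.symm)).symm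
      exfalso
      by_cases h5 : H.Adj b' d
      · exact hda (nP c d b' a hcd h5.symm hab'.symm (fun hh => nT b' c d hh.symm hcd h5)
          (fun hh => h2 hh.symm) (fun hh => h1 hh.symm) (fun hh => h1 (hh ▸ hab')))
      by_cases h6 : H.Adj b' c
      · exact hca (nP d c b' a hcd.symm h6.symm hab'.symm (fun hh => h5 hh.symm)
          (fun hh => h1 hh.symm) (fun hh => h2 hh.symm) (fun hh => h2 (hh ▸ hab')))
      exact hda ((nA a b b' c d hab hab' hcd h3 (fun hh => h5 hh.symm) hbb'
        (fun hh => hdb hh.symm) (fun hh => h1 (hh ▸ hab')) (fun hh => hca hh.symm)).symm)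
    -- completeness between the two sides
    have comp : ∀ x y : V, H.Adj b x → H.Adj a y → H.Adj x y := by
      intro x y hbx hay
      by_cases hxa : x = a
      · subst hxa; exact hay
      by_cases hyb : y = b
      · subst hyb; exact hbx.symm
      by_contra hxy
      have hxa' : ¬ H.Adj x a := fun hh => (nT a b x hab hbx) hh.symm
      have hby' : ¬ H.Adj b y := fun hh => nT a b y hab hh hay
      exact hyb (nP x b a y hbx.symm hab.symm hay hxa' hby' hxy hxa).symm
    refine ⟨{x | H.Adj b x}, {x | H.Adj a x}, ?_, ?_, ?_⟩
    · rw [Set.disjoint_left]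
      intro x hx1 hx2
      exact nT a b x hab hx1 hx2
    · ext x
      simp only [Set.mem_union, Set.mem_setOf_eq, SimpleGraph.mem_support]
      constructor
      · rintro (hh | hh)
        exacts [⟨b, hh.symm⟩, ⟨a, hh.symm⟩]
      · rintro ⟨y, hxy⟩
        rcases crossEdge x y hxy with ⟨hh, _⟩ | ⟨hh, _⟩
        exacts [Or.inl hh, Or.inr hh]
    · intro x y
      simp only [Set.mem_setOf_eq]
      constructor
      · intro hxy
        rcases crossEdge x y hxy with hh | hh
        exacts [Or.inl hh, Or.inr hh]
      · rintro (⟨hx, hy⟩ | ⟨hx, hy⟩)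
        · exact comp x y hx hy
        · exact (comp y x hy hx).symm
  -- Case 5: H is a matching with at least 3 edges
  push_neg at hdeg
  have hm : ∀ x y z : V, H.Adj x y → H.Adj x z → y = z := fun x y z h1 h2 => hdeg x y z h1 h2
  have hfin : H.edgeSet.Finite := H.edgeSet.toFinite
  have hcard3 : 3 ≤ hfin.toFinset.card := by
    have h1 : Nat.card H.edgeSet = hfin.toFinset.card := by
      rw [Nat.card_coe_set_eq, Set.ncard_eq_toFinset_card _ hfin]
    omega
  obtain ⟨e1, he1⟩ := Finset.card_pos.mp (by omega : 0 < hfin.toFinset.card)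
  obtain ⟨e2, he2m, hne21⟩ := Finset.exists_mem_ne (by omega : 1 < hfin.toFinset.card) e1
  have h3pos : 0 < ((hfin.toFinset.erase e1).erase e2).card := by
    have c1 := Finset.card_erase_of_mem he1
    have c2 := Finset.card_erase_of_mem (Finset.mem_erase.mpr ⟨hne21, he2m⟩)
    omega
  obtain ⟨e3, he3m⟩ := Finset.card_pos.mp h3pos
  obtain ⟨hne32, he3m'⟩ := Finset.mem_erase.mp he3m
  obtain ⟨hne31, he3m''⟩ := Finset.mem_erase.mp he3m'
  have rep : ∀ e : Sym2 V, ∃ x y : V, e = s(x, y) := fun e =>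
    Sym2.ind (fun x y => ⟨x, y, rfl⟩) e
  obtain ⟨u1, v1, rfl⟩ := rep e1
  obtain ⟨u2, v2, rfl⟩ := rep e2
  obtain ⟨u3, v3, rfl⟩ := rep e3
  have hadj1 : H.Adj u1 v1 := H.mem_edgeSet.mp (hfin.mem_toFinset.mp he1)
  have hadj2 : H.Adj u2 v2 := H.mem_edgeSet.mp (hfin.mem_toFinset.mp he2m)
  have hadj3 : H.Adj u3 v3 := H.mem_edgeSet.mp (hfin.mem_toFinset.mp he3m'')
  obtain ⟨d12a, d12b, d12c, d12d⟩ := match_disj hm hadj1 hadj2 (Ne.symm hne21)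
  obtain ⟨d13a, d13b, d13c, d13d⟩ := match_disj hm hadj1 hadj3 (Ne.symm hne31)
  obtain ⟨d23a, d23b, d23c, d23d⟩ := match_disj hm hadj2 hadj3 (Ne.symm hne32)
  -- classes X = {u1, v2}, Y = {v1, u3}, Z = {u2, v3}
  exact proj_aux H u1 v2 v1 u3 u2 v3 hadj1 hadj2.symm hadj3
    (fun hh => d12d (hm u1 v1 v2 hadj1 hh))
    (fun hh => d13a (hm v1 u1 u3 hadj1.symm hh))
    (fun hh => d23d (hm u2 v2 v3 hadj2 hh))
    hadj1.ne d13a d12d.symm d23c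
    d12a d13b hadj2.ne.symm d23d
    d12c d13d d23a.symm hadj3.ne
end

section
/- For every graph H and positive integer t, either H has a projection containing t vertex-disjoint triangles, or a cograph can be obtained from H by deleting at most 4t vertices. -/
/-- The vertex set of a triangle given as a triple. -/
def triangleVerts {β : Type*} (p : β × β × β) : Set β := {p.1, p.2.1, p.2.2}

/-- `G` contains `t` vertex-disjoint triangles. -/
def HasDisjointTriangles {β : Type*} (G : SimpleGraph β) (t : ℕ) : Prop :=
  ∃ T : Fin t → β × β × β,
    (∀ i, G.Adj (T i).1 (T i).2.1 ∧ G.Adj (T i).2.1 (T i).2.2 ∧ G.Adj (T i).1 (T i).2.2) ∧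
    ∀ i j, i ≠ j → Disjoint (triangleVerts (T i)) (triangleVerts (T j))

/-- An induced `P4` given as a quadruple. -/
def IsIndP4 {α : Type} (H : SimpleGraph α) (p : α × α × α × α) : Prop :=
  p.1 ≠ p.2.1 ∧ p.1 ≠ p.2.2.1 ∧ p.1 ≠ p.2.2.2 ∧ p.2.1 ≠ p.2.2.1 ∧ p.2.1 ≠ p.2.2.2 ∧
  p.2.2.1 ≠ p.2.2.2 ∧ H.Adj p.1 p.2.1 ∧ H.Adj p.2.1 p.2.2.1 ∧ H.Adj p.2.2.1 p.2.2.2 ∧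
  ¬ H.Adj p.1 p.2.2.1 ∧ ¬ H.Adj p.2.1 p.2.2.2 ∧ ¬ H.Adj p.1 p.2.2.2

/-- Vertex set of a quadruple. -/
def qverts {α : Type} [DecidableEq α] (p : α × α × α × α) : Finset α :=
  {p.1, p.2.1, p.2.2.1, p.2.2.2}

lemma qverts_card {α : Type} [DecidableEq α] (p : α × α × α × α) : (qverts p).card ≤ 4 := by
  unfold qverts
  refine (Finset.card_insert_le _ _).trans (Nat.succ_le_succ ?_)
  refine (Finset.card_insert_le _ _).trans (Nat.succ_le_succ ?_)
  refine (Finset.card_insert_le _ _).trans (Nat.succ_le_succ ?_)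
  simp

lemma mem_qverts {α : Type} [DecidableEq α] {x : α} {p : α × α × α × α} :
    x ∈ qverts p ↔ x = p.1 ∨ x = p.2.1 ∨ x = p.2.2.1 ∨ x = p.2.2.2 := by
  simp [qverts]

/-- Greedy packing lemma: either there are `n` disjoint induced `P4`s, or a cograph
after deleting at most `4n` vertices. -/
lemma greedy {α : Type} [Fintype α] [DecidableEq α] (H : SimpleGraph α) (n : ℕ) :
    (∃ T : Fin n → α × α × α × α, (∀ i, IsIndP4 H (T i)) ∧
      ∀ i j, i ≠ j → Disjoint (qverts (T i)) (qverts (T j))) ∨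
    (∃ S : Finset α, S.card ≤ 4 * n ∧ IsCograph (H.induce ((↑S : Set α)ᶜ))) := by
  induction n with
  | zero =>
    left
    exact ⟨fun i => i.elim0, fun i => i.elim0, fun i => i.elim0⟩
  | succ n ih =>
    rcases ih with ⟨T, hP4, hdisj⟩ | ⟨S, hS, hc⟩
    · set S : Finset α := Finset.univ.biUnion (fun i => qverts (T i)) with hSdef
      have hScard : S.card ≤ 4 * n := by
        refine (Finset.card_biUnion_le).trans ?_
        calc ∑ i : Fin n, (qverts (T i)).card ≤ ∑ _i : Fin n, 4 :=
              Finset.sum_le_sum (fun i _ => qverts_card _)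
          _ = 4 * n := by simp [mul_comm]
      by_cases hc : IsCograph (H.induce ((↑S : Set α)ᶜ))
      · right
        exact ⟨S, hScard.trans (by omega), hc⟩
      · left
        rw [IsCograph, not_not] at hc
        obtain ⟨a, b, c, d, hab, hac, had, hbc, hbd, hcd, Aab, Abc, Acd, Nac, Nbd, Nad⟩ := hc
        have hmemS : ∀ x : ((↑S : Set α)ᶜ : Set α), (x : α) ∉ S := fun x => x.2
        refine ⟨Fin.cons ((a : α), (b : α), (c : α), (d : α)) T, ?_, ?_⟩
        · intro i
          refine Fin.cases ?_ (fun j => by simpa using hP4 j) i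
          simp only [Fin.cons_zero]
          exact ⟨fun h => hab (Subtype.ext h), fun h => hac (Subtype.ext h),
            fun h => had (Subtype.ext h), fun h => hbc (Subtype.ext h),
            fun h => hbd (Subtype.ext h), fun h => hcd (Subtype.ext h),
            Aab, Abc, Acd, Nac, Nbd, Nad⟩
        · have hnew : ∀ j, Disjoint (qverts ((a : α), (b : α), (c : α), (d : α))) (qverts (T j)) := by
            intro j
            rw [Finset.disjoint_left]
            intro x hx hx'
            have hxS : x ∈ S := Finset.mem_biUnion.2 ⟨j, Finset.mem_univ _, hx'⟩
            rcases mem_qverts.1 hx with h | h | h | h <;> subst h <;>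
              first
                | exact hmemS a hxS
                | exact hmemS b hxS
                | exact hmemS c hxS
                | exact hmemS d hxS
          intro i j hij
          rcases Fin.eq_zero_or_eq_succ i with rfl | ⟨i', rfl⟩ <;>
            rcases Fin.eq_zero_or_eq_succ j with rfl | ⟨j', rfl⟩
          · exact absurd rfl hij
          · simpa using hnew j'
          · simpa using (hnew i').symm
          · have hne : i' ≠ j' := fun h => hij (by rw [h])
            simpa using hdisj i' j' hne
    · right
      exact ⟨S, hS.trans (by omega), hc⟩

section Projection

variable {α : Type} [DecidableEq α] {t : ℕ} (H : SimpleGraph α)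
variable (T : Fin t → α × α × α × α)

/-- The projection map collapsing each `P4` to a triangle. -/
noncomputable def projMap (x : α) : Option (Fin t × Fin 3) :=
  if h : ∃ i, x ∈ qverts (T i) then
    (if x = (T h.choose).1 ∨ x = (T h.choose).2.2.2 then some (h.choose, 0)
     else if x = (T h.choose).2.1 then some (h.choose, 1) else some (h.choose, 2))
  else none

variable {T}

lemma choose_eq (hP4 : ∀ i, IsIndP4 H (T i))
    (hdisj : ∀ i j, i ≠ j → Disjoint (qverts (T i)) (qverts (T j)))
    {x : α} {i : Fin t} (hx : x ∈ qverts (T i)) (h : ∃ j, x ∈ qverts (T j)) :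
    h.choose = i := by
  by_contra hne
  exact (Finset.disjoint_left.1 (hdisj _ _ hne) h.choose_spec) hx

variable (hP4 : ∀ i, IsIndP4 H (T i))
    (hdisj : ∀ i j, i ≠ j → Disjoint (qverts (T i)) (qverts (T j)))

include hP4 hdisj

lemma projMap_a (i : Fin t) : projMap T (T i).1 = some (i, 0) := by
  have hmem : (T i).1 ∈ qverts (T i) := mem_qverts.2 (Or.inl rfl)
  have h : ∃ j, (T i).1 ∈ qverts (T j) := ⟨i, hmem⟩
  rw [projMap, dif_pos h, choose_eq H hP4 hdisj hmem h, if_pos (Or.inl rfl)]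

lemma projMap_d (i : Fin t) : projMap T (T i).2.2.2 = some (i, 0) := by
  have hmem : (T i).2.2.2 ∈ qverts (T i) := mem_qverts.2 (by tauto)
  have h : ∃ j, (T i).2.2.2 ∈ qverts (T j) := ⟨i, hmem⟩
  rw [projMap, dif_pos h, choose_eq H hP4 hdisj hmem h, if_pos (Or.inr rfl)]

lemma projMap_b (i : Fin t) : projMap T (T i).2.1 = some (i, 1) := by
  have hmem : (T i).2.1 ∈ qverts (T i) := mem_qverts.2 (by tauto)
  have h : ∃ j, (T i).2.1 ∈ qverts (T j) := ⟨i, hmem⟩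
  obtain ⟨h1, _, _, _, h5, _⟩ := hP4 i
  rw [projMap, dif_pos h, choose_eq H hP4 hdisj hmem h,
    if_neg (by push_neg; exact ⟨h1.symm, h5⟩), if_pos rfl]

lemma projMap_c (i : Fin t) : projMap T (T i).2.2.1 = some (i, 2) := by
  have hmem : (T i).2.2.1 ∈ qverts (T i) := mem_qverts.2 (by tauto)
  have h : ∃ j, (T i).2.2.1 ∈ qverts (T j) := ⟨i, hmem⟩
  obtain ⟨_, h2, _, h4, _, h6, _⟩ := hP4 i
  rw [projMap, dif_pos h, choose_eq H hP4 hdisj hmem h,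
    if_neg (by push_neg; exact ⟨h2.symm, h6⟩), if_neg h4.symm]

lemma projMap_inv {x : α} {u : Fin t × Fin 3} (hx : projMap T x = some u) :
    (u.2 = 0 ∧ (x = (T u.1).1 ∨ x = (T u.1).2.2.2)) ∨
    (u.2 = 1 ∧ x = (T u.1).2.1) ∨ (u.2 = 2 ∧ x = (T u.1).2.2.1) := by
  rw [projMap] at hx
  by_cases h : ∃ j, x ∈ qverts (T j)
  · rw [dif_pos h] at hx
    split_ifs at hx with h1 h2 <;> rw [Option.some_inj] at hx <;> subst hx
    · exact Or.inl ⟨rfl, h1⟩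
    · exact Or.inr (Or.inl ⟨rfl, h2⟩)
    · refine Or.inr (Or.inr ⟨rfl, ?_⟩)
      rcases mem_qverts.1 h.choose_spec with hh | hh | hh | hh
      · exact absurd (Or.inl hh) h1
      · exact absurd hh h2
      · exact hh
      · exact absurd (Or.inr hh) h1
  · rw [dif_neg h] at hx; exact absurd hx (by simp)

lemma projMap_nonadj {x y : α} {u : Fin t × Fin 3}
    (hx : projMap T x = some u) (hy : projMap T y = some u) : ¬ H.Adj x y := by
  obtain ⟨_, _, _, _, _, _, _, _, _, _, _, nad⟩ := hP4 u.1
  rcases projMap_inv H hP4 hdisj hx with ⟨_, hx'⟩ | ⟨_, hx'⟩ | ⟨_, hx'⟩ <;>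
    rcases projMap_inv H hP4 hdisj hy with ⟨_, hy'⟩ | ⟨_, hy'⟩ | ⟨_, hy'⟩ <;>
      try omega
  · rcases hx' with hx' | hx' <;> rcases hy' with hy' | hy' <;> subst hx' <;> subst hy'
    · exact H.loopless.irrefl _
    · exact nad
    · exact fun h => nad h.symm
    · exact H.loopless.irrefl _
  · subst hx'; subst hy'; exact H.loopless.irrefl _
  · subst hx'; subst hy'; exact H.loopless.irrefl _

/-- The projected graph with `t` disjoint triangles. -/
noncomputable def projGraph : SimpleGraph (Fin t × Fin 3) where
  Adj u v := ∃ x y, projMap T x = some u ∧ projMap T y = some v ∧ H.Adj x y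
  symm := by
    constructor
    rintro u v ⟨x, y, hx, hy, hxy⟩
    exact ⟨y, x, hy, hx, hxy.symm⟩
  loopless := by
    constructor
    rintro u ⟨x, y, hx, hy, hxy⟩
    exact projMap_nonadj H hP4 hdisj hx hy hxy

lemma proj_works :
    IsProjection H (projGraph H hP4 hdisj) ∧ HasDisjointTriangles (projGraph H hP4 hdisj) t := by
  constructor
  · refine ⟨projMap T, ?_, ?_, fun _ _ => Iff.rfl⟩
    · rintro ⟨i, k⟩
      fin_cases k
      · exact ⟨(T i).1, projMap_a H hP4 hdisj i⟩
      · exact ⟨(T i).2.1, projMap_b H hP4 hdisj i⟩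
      · exact ⟨(T i).2.2.1, projMap_c H hP4 hdisj i⟩
    · intro x y u hx hy
      exact projMap_nonadj H hP4 hdisj hx hy
  · refine ⟨fun i => ((i, 0), (i, 1), (i, 2)), ?_, ?_⟩
    · intro i
      obtain ⟨_, _, _, _, _, _, A1, A2, A3, _⟩ := hP4 i
      exact ⟨⟨(T i).1, (T i).2.1, projMap_a H hP4 hdisj i, projMap_b H hP4 hdisj i, A1⟩,
        ⟨(T i).2.1, (T i).2.2.1, projMap_b H hP4 hdisj i, projMap_c H hP4 hdisj i, A2⟩,
        ⟨(T i).2.2.2, (T i).2.2.1, projMap_d H hP4 hdisj i, projMap_c H hP4 hdisj i, A3.symm⟩⟩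
    · intro i j hij
      rw [Set.disjoint_left]
      intro z hz hz'
      simp only [triangleVerts, Set.mem_insert_iff, Set.mem_singleton_iff] at hz hz'
      apply hij
      rcases hz with h | h | h <;> rcases hz' with h' | h' | h' <;>
        (rw [h] at h'; exact congrArg Prod.fst h')

end Projection

/-- For every graph `H` and positive integer `t`, either `H` has a projection containing
`t` vertex-disjoint triangles, or a cograph can be obtained from `H` by deleting at
most `4t` vertices. -/
theorem stmt5 {α : Type} [Fintype α] (H : SimpleGraph α) (t : ℕ) (ht : 1 ≤ t) :
    (∃ (β : Type) (_ : Fintype β) (H' : SimpleGraph β),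
        IsProjection H H' ∧ HasDisjointTriangles H' t) ∨
    (∃ S : Finset α, S.card ≤ 4 * t ∧ IsCograph (H.induce ((↑S : Set α)ᶜ))) := by
  classical
  rcases greedy H t with ⟨T, hP4, hdisj⟩ | hc
  · left
    exact ⟨Fin t × Fin 3, inferInstance, projGraph H hP4 hdisj, proj_works H hP4 hdisj⟩
  · right
    exact hc
end

section
/- If a graph H contains at least 3t connected components each having at least two vertices (for a positive integer t), then H has a projection containing t vertex-disjoint triangles. -/
/-- If a graph `H` has at least `3t` connected components each containing at least two
vertices (here witnessed by an injection from `Fin (3*t)` into the nonsingular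
components of `H`), then `H` has a projection containing `t` vertex-disjoint
triangles. -/
theorem stmt8 {α : Type} [Fintype α] (H : SimpleGraph α) (t : ℕ) (ht : 1 ≤ t)
    (f : Fin (3 * t) → H.ConnectedComponent) (hf : Function.Injective f)
    (hns : ∀ i, ∃ u v : α, u ≠ v ∧
      H.connectedComponentMk u = f i ∧ H.connectedComponentMk v = f i) :
    ∃ (β : Type) (_ : Fintype β) (H' : SimpleGraph β),
      IsProjection H H' ∧ HasDisjointTriangles H' t := by
  classical
  -- pick an edge in each of the 3t components
  have hedge : ∀ i : Fin (3 * t), ∃ a b : α,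
      H.Adj a b ∧ H.connectedComponentMk a = f i := by
    intro i
    obtain ⟨u, v, huv, hu, hv⟩ := hns i
    have hr : H.Reachable u v := SimpleGraph.ConnectedComponent.exact (hu.trans hv.symm)
    obtain ⟨w⟩ := hr
    cases w with
    | nil => exact absurd rfl huv
    | cons h p => exact ⟨u, _, h, hu⟩
  choose x y he hc using hedge
  have hcy : ∀ i, H.connectedComponentMk (y i) = f i := fun i =>
    ((SimpleGraph.ConnectedComponent.sound (he i).reachable).symm).trans (hc i)
  have hxinj : Function.Injective x := fun i j h => hf (by rw [← hc i, ← hc j, h])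
  have hyinj : Function.Injective y := fun i j h => hf (by rw [← hcy i, ← hcy j, h])
  have hxy : ∀ i j, x i ≠ y j := by
    intro i j hij
    by_cases hij' : i = j
    · subst hij'; exact (he i).ne hij
    · exact hij' (hf (by rw [← hc i, ← hcy j, hij]))
  set ι : Fin 3 × Fin t ≃ Fin (3 * t) := finProdFinEquiv with hι
  set φ : Fin (3 * t) → Fin 3 × Fin t := fun i => ι.symm i with hφ
  set ψ : Fin (3 * t) → Fin 3 × Fin t := fun i => ((ι.symm i).1 + 1, (ι.symm i).2) with hψ
  set F : α → Option (Fin 3 × Fin t) := fun a =>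
    if h : ∃ i, a = x i then some (φ h.choose)
    else if h' : ∃ i, a = y i then some (ψ h'.choose) else none with hF
  have hFx : ∀ i, F (x i) = some (φ i) := by
    intro i
    have hex : ∃ j, x i = x j := ⟨i, rfl⟩
    rw [hF]
    dsimp only
    rw [dif_pos hex]
    exact congrArg some (congrArg φ (hxinj hex.choose_spec).symm)
  have hFy : ∀ i, F (y i) = some (ψ i) := by
    intro i
    have hnex : ¬∃ j, y i = x j := by
      rintro ⟨j, hj⟩; exact hxy j i hj.symm
    have hex : ∃ j, y i = y j := ⟨i, rfl⟩
    rw [hF]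
    dsimp only
    rw [dif_neg hnex, dif_pos hex]
    exact congrArg some (congrArg ψ (hyinj hex.choose_spec).symm)
  have hchar : ∀ a b, F a = some b →
      (∃ i, a = x i ∧ b = φ i) ∨ (∃ i, a = y i ∧ b = ψ i) := by
    intro a b hab
    rw [hF] at hab
    dsimp only at hab
    by_cases h : ∃ i, a = x i
    · rw [dif_pos h] at hab
      exact Or.inl ⟨h.choose, h.choose_spec, (Option.some_inj.mp hab).symm⟩
    · rw [dif_neg h] at hab
      by_cases h' : ∃ i, a = y i
      · rw [dif_pos h'] at hab
        exact Or.inr ⟨h'.choose, h'.choose_spec, (Option.some_inj.mp hab).symm⟩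
      · rw [dif_neg h'] at hab; exact absurd hab (by simp)
  have hφinj : Function.Injective φ := fun i j h => ι.symm.injective h
  have hψinj : Function.Injective ψ := by
    intro i j h
    simp only [hψ, Prod.mk.injEq] at h
    exact ι.symm.injective (Prod.ext (add_right_cancel h.1) h.2)
  have h10 : (1 : Fin 3) ≠ 0 := by decide
  -- separation property
  have hsep : ∀ a a' b, F a = some b → F a' = some b → ¬H.Adj a a' := by
    intro a a' b ha ha' hadj
    have hcomp : H.connectedComponentMk a = H.connectedComponentMk a' :=
      SimpleGraph.ConnectedComponent.sound hadj.reachable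
    rcases hchar a b ha with ⟨i, rfl, hbi⟩ | ⟨i, rfl, hbi⟩ <;>
      rcases hchar a' b ha' with ⟨j, rfl, hbj⟩ | ⟨j, rfl, hbj⟩
    · have : i = j := hφinj (hbi.symm.trans hbj)
      subst this; exact hadj.ne rfl
    · have hij : i = j := hf (by rw [← hc i, ← hcy j, hcomp])
      subst hij
      have hb := hbi.symm.trans hbj
      simp only [hφ, hψ, Prod.ext_iff] at hb
      exact h10 (left_eq_add.mp hb.1)
    · have hij : i = j := hf (by rw [← hcy i, ← hc j, hcomp])
      subst hij
      have hb := hbj.symm.trans hbi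
      simp only [hφ, hψ, Prod.ext_iff] at hb
      exact h10 (left_eq_add.mp hb.1)
    · have : i = j := hψinj (hbi.symm.trans hbj)
      subst this; exact hadj.ne rfl
  refine ⟨Fin 3 × Fin t, inferInstance,
    { Adj := fun b b' => ∃ a a', F a = some b ∧ F a' = some b' ∧ H.Adj a a'
      symm := ⟨by rintro b b' ⟨a, a', h1, h2, h3⟩; exact ⟨a', a, h2, h1, h3.symm⟩⟩
      loopless := ⟨by rintro b ⟨a, a', h1, h2, h3⟩; exact hsep a a' b h1 h2 h3⟩ }, ?_, ?_⟩
  · refine ⟨F, ?_, hsep, fun b b' => Iff.rfl⟩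
    intro b
    refine ⟨x (ι b), ?_⟩
    rw [hFx]
    simp [hφ]
  · refine ⟨fun q => (((0 : Fin 3), q), ((1 : Fin 3), q), ((2 : Fin 3), q)), ?_, ?_⟩
    · intro q
      have key : ∀ r : Fin 3, ∃ a a', F a = some (r, q) ∧ F a' = some (r + 1, q) ∧ H.Adj a a' := by
        intro r
        refine ⟨x (ι (r, q)), y (ι (r, q)), ?_, ?_, he _⟩
        · rw [hFx]; simp [hφ]
        · rw [hFy]; simp [hψ]
      refine ⟨?_, ?_, ?_⟩
      · have := key 0; simpa using this
      · have h := key 1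
        have h' : ((1 : Fin 3) + 1) = 2 := by decide
        rw [h'] at h; exact h
      · have h := key 2
        have h' : ((2 : Fin 3) + 1) = 0 := by decide
        rw [h'] at h
        obtain ⟨a, a', h1, h2, h3⟩ := h
        exact ⟨a', a, h2, h1, h3.symm⟩
    · intro i j hij
      rw [Set.disjoint_left]
      intro p hp hq
      simp only [triangleVerts, Set.mem_insert_iff, Set.mem_singleton_iff] at hp hq
      have hpi : p.2 = i := by rcases hp with rfl | rfl | rfl <;> rfl
      have hpj : p.2 = j := by rcases hq with rfl | rfl | rfl <;> rfl
      exact hij (hpi ▸ hpj)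
end

section
/- The disjoint union of two copies of the complete bipartite graph K_{2t,2t} has a projection containing t vertex-disjoint triangles. -/
/-- The disjoint union of two copies of the complete bipartite graph `K_{2t,2t}`:
vertices are triples (copy, side, index); two vertices are adjacent iff they are in
the same copy and on different sides. -/
def twoBicliques (t : ℕ) : SimpleGraph (Fin 2 × Fin 2 × Fin (2 * t)) where
  Adj x y := x.1 = y.1 ∧ x.2.1 ≠ y.2.1
  symm := ⟨fun _ _ h => ⟨h.1.symm, h.2.symm⟩⟩
  loopless := ⟨fun _ h => h.2 rfl⟩

def projF (t : ℕ) : Fin 2 × Fin 2 × Fin (2 * t) → Option (Fin t × Fin 3) :=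
  fun x =>
    if x.2.2.val % 2 = 0 then
      some (⟨x.2.2.val / 2, by have := x.2.2.isLt; omega⟩, if x.2.1 = 0 then 0 else 1)
    else if x.1 ≠ x.2.1 then some (⟨x.2.2.val / 2, by have := x.2.2.isLt; omega⟩, 2)
    else none

lemma projF_fiber (t : ℕ) (a a' : Fin 2 × Fin 2 × Fin (2 * t)) (b : Fin t × Fin 3)
    (h : projF t a = some b) (h' : projF t a' = some b) : ¬ (twoBicliques t).Adj a a' := by
  rintro ⟨hc, hs⟩
  obtain ⟨c, s, k⟩ := a
  obtain ⟨c', s', k'⟩ := a'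
  simp only at hc hs
  subst hc
  unfold projF at h h'
  simp only at h h'
  split_ifs at h h' <;> fin_cases c <;> fin_cases s <;> fin_cases s' <;> try simp_all
  all_goals
    have heq := h.trans h'.symm
    simp only [Prod.mk.injEq] at heq
    exact absurd heq.2 (by decide)

/-- The disjoint union of two copies of `K_{2t,2t}` has a projection containing `t`
vertex-disjoint triangles. -/
theorem stmt9 (t : ℕ) (ht : 1 ≤ t) :
    ∃ (β : Type) (_ : Fintype β) (H' : SimpleGraph β),
      IsProjection (twoBicliques t) H' ∧ HasDisjointTriangles H' t := by
  classical
  refine ⟨Fin t × Fin 3, inferInstance,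
    { Adj := fun b b' => ∃ a a', projF t a = some b ∧ projF t a' = some b' ∧
        (twoBicliques t).Adj a a'
      symm := ⟨fun b b' ⟨a, a', h1, h2, h3⟩ => ⟨a', a, h2, h1, h3.symm⟩⟩
      loopless := ⟨fun b ⟨a, a', h1, h2, h3⟩ => projF_fiber t a a' b h1 h2 h3⟩ }, ?_, ?_⟩
  · refine ⟨projF t, ?_, projF_fiber t, fun b b' => Iff.rfl⟩
    rintro ⟨q, j⟩
    fin_cases j
    · exact ⟨(0, 0, ⟨2 * q.val, by have := q.isLt; omega⟩), by
        unfold projF; simp [Nat.mul_div_cancel_left]⟩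
    · exact ⟨(0, 1, ⟨2 * q.val, by have := q.isLt; omega⟩), by
        unfold projF; simp [Nat.mul_div_cancel_left]⟩
    · exact ⟨(0, 1, ⟨2 * q.val + 1, by have := q.isLt; omega⟩), by
        unfold projF; simp [Nat.mul_add_div]⟩
  · refine ⟨fun i => ((i, 0), (i, 1), (i, 2)), fun i => ?_, ?_⟩
    · have hk0 : (2 * i.val) < 2 * t := by have := i.isLt; omega
      have hk1 : (2 * i.val + 1) < 2 * t := by have := i.isLt; omega
      have e0 : projF t (0, 0, ⟨2 * i.val, hk0⟩) = some (i, 0) := by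
        unfold projF; simp [Nat.mul_div_cancel_left]
      have e1 : projF t (0, 1, ⟨2 * i.val, hk0⟩) = some (i, 1) := by
        unfold projF; simp [Nat.mul_div_cancel_left]
      have e1' : projF t (1, 1, ⟨2 * i.val, hk0⟩) = some (i, 1) := by
        unfold projF; simp [Nat.mul_div_cancel_left]
      have e2 : projF t (1, 0, ⟨2 * i.val + 1, hk1⟩) = some (i, 2) := by
        unfold projF; simp [Nat.mul_add_div]
      have e2' : projF t (0, 1, ⟨2 * i.val + 1, hk1⟩) = some (i, 2) := by
        unfold projF; simp [Nat.mul_add_div]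
      have a01 : (twoBicliques t).Adj (0, 0, ⟨2 * i.val, hk0⟩) (0, 1, ⟨2 * i.val, hk0⟩) :=
        ⟨rfl, Fin.zero_ne_one⟩
      have a12 : (twoBicliques t).Adj (1, 1, ⟨2 * i.val, hk0⟩) (1, 0, ⟨2 * i.val + 1, hk1⟩) :=
        ⟨rfl, one_ne_zero⟩
      have a02 : (twoBicliques t).Adj (0, 0, ⟨2 * i.val, hk0⟩) (0, 1, ⟨2 * i.val + 1, hk1⟩) :=
        ⟨rfl, Fin.zero_ne_one⟩
      exact ⟨⟨_, _, e0, e1, a01⟩, ⟨_, _, e1', e2, a12⟩, ⟨_, _, e0, e2', a02⟩⟩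
    · intro i j hij
      simp only [triangleVerts, Set.disjoint_iff_inter_eq_empty]
      ext ⟨q, x⟩
      simp only [Set.mem_inter_iff, Set.mem_insert_iff, Set.mem_singleton_iff,
        Set.mem_empty_iff_false, iff_false, Prod.mk.injEq, not_and]
      rintro (⟨rfl, _⟩ | ⟨rfl, _⟩ | ⟨rfl, _⟩) <;> rintro (⟨h, _⟩ | ⟨h, _⟩ | ⟨h, _⟩) <;>
        simp_all
end

section
/- Let H be a projection-closed class of graphs. Then either H contains K_t for every t ≥ 1, or H contains K_{t,t,t} for every t ≥ 1, or there exists μ ≥ 0 such that every graph in H has distance at most μ to an extended biclique. -/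
/-- The complete tripartite graph `K_{t,t,t}` with parts of size `t`. -/
def completeTripartite (t : ℕ) : SimpleGraph (Fin 3 × Fin t) where
  Adj x y := x.1 ≠ y.1
  symm := ⟨fun _ _ h => h.symm⟩
  loopless := ⟨fun _ h => h rfl⟩

/-- An extended biclique: a complete bipartite graph together with a (possibly empty)
set of isolated vertices. -/
def IsExtendedBiclique {V : Type*} (G : SimpleGraph V) : Prop :=
  ∃ A B : Set V, Disjoint A B ∧
    ∀ a b : V, G.Adj a b ↔ ((a ∈ A ∧ b ∈ B) ∨ (a ∈ B ∧ b ∈ A))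

theorem completeTripartite_adj {t : ℕ} {x y : Fin 3 × Fin t} :
    (completeTripartite t).Adj x y ↔ x.1 ≠ y.1 := Iff.rfl

theorem isProjection_of_enc {α β I : Type*} (G : SimpleGraph α) (H' : SimpleGraph β)
    (enc : I → α) (hinj : Function.Injective enc) (tgt : I → Option β)
    (hsurj : ∀ b, ∃ i, tgt i = some b)
    (hno : ∀ i i' b b', tgt i = some b → tgt i' = some b' → ¬ H'.Adj b b' →
      ¬ G.Adj (enc i) (enc i'))
    (hyes : ∀ b b', H'.Adj b b' → ∃ i i', tgt i = some b ∧ tgt i' = some b' ∧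
      G.Adj (enc i) (enc i')) :
    IsProjection G H' := by
  classical
  set f : α → Option β := fun a => if h : ∃ i, enc i = a then tgt h.choose else none with hf
  have hfe : ∀ i, f (enc i) = tgt i := by
    intro i
    have h : ∃ j, enc j = enc i := ⟨i, rfl⟩
    simp only [hf, dif_pos h]
    rw [hinj h.choose_spec]
  have hfi : ∀ a b, f a = some b → ∃ i, enc i = a ∧ tgt i = some b := by
    intro a b hab
    by_cases h : ∃ i, enc i = a
    · refine ⟨h.choose, h.choose_spec, ?_⟩
      simpa only [hf, dif_pos h] using hab
    · rw [hf] at hab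
      simp only [dif_neg h] at hab
      cases hab
  refine ⟨f, ?_, ?_, ?_⟩
  · intro b; obtain ⟨i, hi⟩ := hsurj b; exact ⟨enc i, (hfe i).trans hi⟩
  · intro a a' b ha ha' hadj
    obtain ⟨i, rfl, hi⟩ := hfi _ _ ha
    obtain ⟨i', rfl, hi'⟩ := hfi _ _ ha'
    exact hno i i' b b hi hi' (H'.irrefl) hadj
  · intro b b'
    constructor
    · intro h
      obtain ⟨i, i', h1, h2, h3⟩ := hyes b b' h
      exact ⟨enc i, enc i', (hfe i).trans h1, (hfe i').trans h2, h3⟩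
    · rintro ⟨a, a', ha, ha', hadj⟩
      by_contra hna
      obtain ⟨i, rfl, hi⟩ := hfi _ _ ha
      obtain ⟨i', rfl, hi'⟩ := hfi _ _ ha'
      exact hno i i' b b' hi hi' hna hadj

theorem proj_top_of_clique {α : Type*} {G : SimpleGraph α} {k : ℕ}
    (v : Fin k → α) (hv : Function.Injective v)
    (hadj : ∀ i j, i ≠ j → G.Adj (v i) (v j)) :
    IsProjection G (⊤ : SimpleGraph (Fin k)) := by
  refine isProjection_of_enc G _ v hv (fun i => some i) (fun b => ⟨b, rfl⟩) ?_ ?_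
  · rintro i i' b b' hb hb' hna
    simp only [Option.some.injEq] at hb hb'
    subst hb; subst hb'
    have hii : i = i' := by
      by_contra h
      exact hna (by simp [SimpleGraph.top_adj, h])
    subst hii; exact G.irrefl
  · intro b b' h
    exact ⟨b, b', rfl, rfl, hadj b b' ((SimpleGraph.top_adj _ _).mp h)⟩

private def enc2 {α : Type*} {k : ℕ} (v v' : Fin k → α) : Fin k × Bool → α :=
  fun x => bif x.2 then v' x.1 else v x.1

private theorem enc2_inj {α : Type*} {k : ℕ} {v v' : Fin k → α}
    (h1 : Function.Injective v) (h2 : Function.Injective v')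
    (h12 : ∀ i j, v i ≠ v' j) : Function.Injective (enc2 v v') := by
  rintro ⟨i, e⟩ ⟨j, f⟩ h
  unfold enc2 at h
  cases e <;> cases f <;> simp only [cond_true, cond_false] at h
  · rw [h1 h]
  · exact absurd h (h12 i j)
  · exact absurd h.symm (h12 j i)
  · rw [h2 h]

theorem proj_top_of_pairs {α : Type*} {G : SimpleGraph α} {k : ℕ}
    (v v' : Fin k → α) (h1 : Function.Injective v) (h2 : Function.Injective v')
    (h12 : ∀ i j, v i ≠ v' j)
    (hind : ∀ i, ¬ G.Adj (v i) (v' i))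
    (hcross : ∀ i j, i < j → G.Adj (v i) (v' j)) :
    IsProjection G (⊤ : SimpleGraph (Fin k)) := by
  refine isProjection_of_enc G _ (enc2 v v') (enc2_inj h1 h2 h12)
    (fun x => some x.1) (fun b => ⟨(b, false), rfl⟩) ?_ ?_
  · rintro ⟨i, e⟩ ⟨i', e'⟩ b b' hb hb' hna
    simp only [Option.some.injEq] at hb hb'
    subst hb; subst hb'
    have hii : i = i' := by
      by_contra h
      exact hna (by simp [SimpleGraph.top_adj, h])
    subst hii
    unfold enc2
    cases e <;> cases e' <;> simp only [cond_true, cond_false]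
    · exact G.irrefl
    · exact hind i
    · exact fun h => hind i h.symm
    · exact G.irrefl
  · intro b b' h
    have hbb : b ≠ b' := (SimpleGraph.top_adj _ _).mp h
    rcases lt_or_gt_of_ne hbb with hlt | hgt
    · exact ⟨(b, false), (b', true), rfl, rfl, hcross b b' hlt⟩
    · exact ⟨(b, true), (b', false), rfl, rfl, (hcross b' b hgt).symm⟩

theorem proj_top_of_matching {α : Type*} {G : SimpleGraph α} {k p : ℕ}
    (hp : 2 ≤ p) (hpk : p * p ≤ k)
    (v v' : Fin k → α) (h1 : Function.Injective v) (h2 : Function.Injective v')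
    (h12 : ∀ i j, v i ≠ v' j)
    (hedge : ∀ i, G.Adj (v i) (v' i))
    (hnc : ∀ i j, i ≠ j →
      ¬G.Adj (v i) (v j) ∧ ¬G.Adj (v i) (v' j) ∧ ¬G.Adj (v' i) (v' j)) :
    IsProjection G (⊤ : SimpleGraph (Fin p)) := by
  haveI : NeZero p := ⟨by omega⟩
  set e := (finProdFinEquiv : Fin p × Fin p ≃ Fin (p * p)) with he
  set c : Fin (p * p) → Fin k := Fin.castLE hpk with hc
  have hcinj : Function.Injective c := by
    rw [hc]; exact Fin.castLE_injective hpk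
  set tgt : Fin (p * p) × Bool → Option (Fin p) := fun x =>
    if (e.symm x.1).1 = (e.symm x.1).2 then none
    else some (bif x.2 then (e.symm x.1).2 else (e.symm x.1).1) with htgt
  have hstep : ∀ b b' : Fin p, b ≠ b' →
      tgt (e (b, b'), false) = some b ∧ tgt (e (b, b'), true) = some b' := by
    intro b b' hbb
    rw [htgt]
    simp only [Equiv.symm_apply_apply]
    rw [if_neg hbb, if_neg hbb]
    exact ⟨rfl, rfl⟩
  refine isProjection_of_enc G _ (enc2 (v ∘ c) (v' ∘ c))
    (enc2_inj (h1.comp hcinj) (h2.comp hcinj) (fun i j => h12 (c i) (c j)))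
    tgt ?_ ?_ ?_
  · intro b
    have hbb : b ≠ b + 1 := by
      intro hcon
      have h10 : (1 : Fin p) = 0 := by
        have := left_eq_add.mp hcon
        exact this
      rw [Fin.one_eq_zero_iff] at h10
      omega
    exact ⟨(e (b, b + 1), false), (hstep b (b + 1) hbb).1⟩
  · rintro ⟨i, d⟩ ⟨i', d'⟩ b b' hb hb' hna
    have hbb : b = b' := by
      by_contra hcon
      exact hna (by simp [SimpleGraph.top_adj, hcon])
    subst hbb
    simp only [htgt] at hb hb'
    by_cases hd1 : (e.symm i).1 = (e.symm i).2
    · rw [if_pos hd1] at hb; cases hb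
    by_cases hd2 : (e.symm i').1 = (e.symm i').2
    · rw [if_pos hd2] at hb'; cases hb'
    rw [if_neg hd1] at hb; rw [if_neg hd2] at hb'
    have hb := Option.some.inj hb
    have hb' := Option.some.inj hb'
    by_cases hii : i = i'
    · subst hii
      cases d <;> cases d' <;> simp only [cond_true, cond_false] at hb hb'
      · exact fun h => G.loopless.irrefl _ h
      · exact absurd (hb.trans hb'.symm) hd1
      · exact absurd (hb'.trans hb.symm) hd1
      · exact fun h => G.loopless.irrefl _ h
    · have hcc : c i ≠ c i' := fun h => hii (hcinj h)
      obtain ⟨n1, n2, n3⟩ := hnc (c i) (c i') hcc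
      obtain ⟨m1, m2, m3⟩ := hnc (c i') (c i) hcc.symm
      cases d <;> cases d' <;> simp only [enc2, cond_true, cond_false]
      · exact n1
      · exact n2
      · exact fun h => m2 h.symm
      · exact n3
  · intro b b' h
    have hbb : b ≠ b' := (SimpleGraph.top_adj _ _).mp h
    refine ⟨(e (b, b'), false), (e (b, b'), true),
      (hstep b b' hbb).1, (hstep b b' hbb).2, ?_⟩
    simpa [enc2] using hedge (c (e (b, b')))

theorem proj_trip_of_blocks {α : Type*} {G : SimpleGraph α} {k q : ℕ} (hqk : 2 * q ≤ k)
    (W : Fin k → Fin 4 → α)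
    (hinj : ∀ i i' s t, W i s = W i' t → i = i' ∧ s = t)
    (R : Fin 4 → Fin 4 → Prop)
    (hadj : ∀ i i' s t, ¬(i = i' ∧ s = t) → (G.Adj (W i s) (W i' t) ↔ R s t))
    (L : Fin 3 → Fin 2 → Fin 4)
    (hL : ∀ e e', L 0 e ≠ L 1 e')
    (hind : ∀ c e e', ¬ R (L c e) (L c e'))
    (hrich : ∀ c c', c ≠ c' → ∃ e e', R (L c e) (L c' e')) :
    IsProjection G (completeTripartite q) := by
  classical
  set tgt : Fin k × Fin 4 → Option (Fin 3 × Fin q) := fun x =>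
    if h : (x.1 : ℕ) < q then
      (if x.2 = L 0 0 ∨ x.2 = L 0 1 then some (0, ⟨x.1, h⟩)
       else if x.2 = L 1 0 ∨ x.2 = L 1 1 then some (1, ⟨x.1, h⟩) else none)
    else if h2 : (x.1 : ℕ) < 2 * q then
      (if x.2 = L 2 0 ∨ x.2 = L 2 1 then some (2, ⟨(x.1 : ℕ) - q, by omega⟩) else none)
    else none with htgt
  have hinv : ∀ i s c x, tgt (i, s) = some (c, x) → ∃ e, s = L c e := by
    intro i s c x h
    simp only [htgt] at h
    split_ifs at h with h1 h2 h3 h4 h5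
    · have hc : (0 : Fin 3) = c := congrArg Prod.fst (Option.some.inj h)
      rcases h2 with h' | h'
      · exact ⟨0, by rw [h', ← hc]⟩
      · exact ⟨1, by rw [h', ← hc]⟩
    · have hc : (1 : Fin 3) = c := congrArg Prod.fst (Option.some.inj h)
      rcases h3 with h' | h'
      · exact ⟨0, by rw [h', ← hc]⟩
      · exact ⟨1, by rw [h', ← hc]⟩
    · have hc : (2 : Fin 3) = c := congrArg Prod.fst (Option.some.inj h)
      rcases h5 with h' | h'
      · exact ⟨0, by rw [h', ← hc]⟩
      · exact ⟨1, by rw [h', ← hc]⟩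
  set idx : Fin 3 → Fin q → Fin k := fun c x =>
    if c = 2 then ⟨q + (x : ℕ), by omega⟩ else ⟨(x : ℕ), by omega⟩ with hidx
  have hvidx : ∀ (c : Fin 3) (x : Fin q),
      ((idx c x : Fin k) : ℕ) = if c = 2 then q + (x : ℕ) else (x : ℕ) := by
    intro c x
    simp only [hidx]
    by_cases h : c = 2
    · rw [if_pos h, if_pos h]
    · rw [if_neg h, if_neg h]
  have hor : ∀ (c : Fin 3) (e : Fin 2), L c e = L c 0 ∨ L c e = L c 1 := by
    intro c e
    fin_cases e
    · exact Or.inl rfl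
    · exact Or.inr rfl
  have hvtgt : ∀ (c : Fin 3) (x : Fin q) (e : Fin 2), tgt (idx c x, L c e) = some (c, x) := by
    intro c x e
    by_cases hc2 : c = 2
    · subst hc2
      have hval : ((idx 2 x : Fin k) : ℕ) = q + (x : ℕ) := by rw [hvidx, if_pos rfl]
      simp only [htgt]
      rw [dif_neg (by rw [hval]; omega), dif_pos (by rw [hval]; omega), if_pos (hor 2 e)]
      simp only [Option.some.injEq, Prod.mk.injEq, true_and]
      apply Fin.ext
      simp only [hval]
      omega
    by_cases hc0 : c = 0
    · subst hc0
      have hval : ((idx 0 x : Fin k) : ℕ) = (x : ℕ) := by rw [hvidx, if_neg (by decide)]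
      simp only [htgt]
      rw [dif_pos (by rw [hval]; exact x.isLt), if_pos (hor 0 e)]
      simp only [Option.some.injEq, Prod.mk.injEq, true_and]
      apply Fin.ext
      simp only [hval]
    · have hc1 : c = 1 := by
        fin_cases c
        · exact absurd rfl hc0
        · rfl
        · exact absurd rfl hc2
      subst hc1
      have hval : ((idx 1 x : Fin k) : ℕ) = (x : ℕ) := by rw [hvidx, if_neg (by decide)]
      have hnot : ¬((L 1 e = L 0 0) ∨ (L 1 e = L 0 1)) := by
        rintro (h | h)
        · exact hL 0 e h.symm
        · exact hL 1 e h.symm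
      simp only [htgt]
      rw [dif_pos (by rw [hval]; exact x.isLt), if_neg hnot, if_pos (hor 1 e)]
      simp only [Option.some.injEq, Prod.mk.injEq, true_and]
      apply Fin.ext
      simp only [hval]
  refine isProjection_of_enc G _ (fun x : Fin k × Fin 4 => W x.1 x.2)
    (fun a b h => by
      obtain ⟨h1, h2⟩ := hinj a.1 b.1 a.2 b.2 h
      exact Prod.ext h1 h2)
    tgt ?_ ?_ ?_
  · rintro ⟨c, x⟩
    exact ⟨(idx c x, L c 0), hvtgt c x 0⟩
  · rintro ⟨i, s⟩ ⟨i', s'⟩ ⟨c, x⟩ ⟨c', y⟩ hb hb' hna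
    have hcc : c = c' := by
      by_contra hcon
      exact hna (by rw [completeTripartite_adj]; exact hcon)
    subst hcc
    obtain ⟨e, rfl⟩ := hinv _ _ _ _ hb
    obtain ⟨e', rfl⟩ := hinv _ _ _ _ hb'
    by_cases hsame : i = i' ∧ L c e = L c e'
    · obtain ⟨rfl, h2⟩ := hsame
      rw [h2]
      exact G.loopless.irrefl _
    · intro hadj'
      exact hind c e e' ((hadj i i' _ _ hsame).mp hadj')
  · rintro ⟨c, x⟩ ⟨c', y⟩ hadj'
    rw [completeTripartite_adj] at hadj'
    simp only at hadj'
    obtain ⟨e, e', hR⟩ := hrich c c' hadj'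
    refine ⟨(idx c x, L c e), (idx c' y, L c' e'), hvtgt c x e, hvtgt c' y e', ?_⟩
    refine (hadj _ _ _ _ ?_).mpr hR
    rintro ⟨hi, hs⟩
    have hvi := congrArg Fin.val hi
    rw [hvidx, hvidx] at hvi
    have hx := x.isLt
    have hy := y.isLt
    fin_cases c <;> fin_cases c' <;> simp only at *
    · exact hadj' rfl
    · exact hL e e' hs
    · rw [if_neg (by decide), if_pos (by decide)] at hvi; omega
    · exact hL e' e hs.symm
    · exact hadj' rfl
    · rw [if_neg (by decide), if_pos (by decide)] at hvi; omega
    · rw [if_pos (by decide), if_neg (by decide)] at hvi; omega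
    · rw [if_pos (by decide), if_neg (by decide)] at hvi; omega
    · exact hadj' rfl

theorem proj_trip_of_triangles {α : Type*} {G : SimpleGraph α} {k q : ℕ}
    (hq : 1 ≤ q) (hqk : q * q ≤ k)
    (W : Fin k → Fin 3 → α)
    (hinj : ∀ i i' s t, W i s = W i' t → i = i' ∧ s = t)
    (htri : ∀ i s t, s ≠ t → G.Adj (W i s) (W i t))
    (hcross : ∀ i i' s, i ≠ i' → ¬ G.Adj (W i s) (W i' s)) :
    IsProjection G (completeTripartite q) := by
  classical
  haveI : NeZero q := ⟨by omega⟩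
  set e := (finProdFinEquiv : Fin q × Fin q ≃ Fin (q * q)) with he
  set c : Fin (q * q) → Fin k := Fin.castLE hqk with hc
  have hcinj : Function.Injective c := by
    rw [hc]; exact Fin.castLE_injective hqk
  set ψ : Fin 3 → Fin (q * q) → Fin q := fun s i =>
    if s = 0 then (e.symm i).1 else if s = 1 then (e.symm i).2
    else (e.symm i).1 + (e.symm i).2 with hψ
  have hψ0 : ∀ x y : Fin q, ψ 0 (e (x, y)) = x := by
    intro x y; simp [hψ]
  have hψ1 : ∀ x y : Fin q, ψ 1 (e (x, y)) = y := by
    intro x y; simp [hψ]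
  have hψ2 : ∀ x y : Fin q, ψ 2 (e (x, y)) = x + y := by
    intro x y; simp [hψ]
  have hsolve : ∀ γ γ' : Fin 3, γ ≠ γ' → ∀ x y : Fin q,
      ∃ i : Fin (q * q), ψ γ i = x ∧ ψ γ' i = y := by
    intro γ γ' hne x y
    fin_cases γ <;> fin_cases γ'
    · exact absurd rfl hne
    · exact ⟨e (x, y), hψ0 x y, hψ1 x y⟩
    · refine ⟨e (x, y - x), hψ0 x (y - x), ?_⟩
      show ψ 2 (e (x, y - x)) = y
      rw [hψ2, add_comm, sub_add_cancel]
    · exact ⟨e (y, x), hψ1 y x, hψ0 y x⟩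
    · exact absurd rfl hne
    · refine ⟨e (y - x, x), hψ1 (y - x) x, ?_⟩
      show ψ 2 (e (y - x, x)) = y
      rw [hψ2, sub_add_cancel]
    · refine ⟨e (y, x - y), ?_, hψ0 y (x - y)⟩
      show ψ 2 (e (y, x - y)) = x
      rw [hψ2, add_comm, sub_add_cancel]
    · refine ⟨e (x - y, y), ?_, hψ1 (x - y) y⟩
      show ψ 2 (e (x - y, y)) = x
      rw [hψ2, sub_add_cancel]
    · exact absurd rfl hne
  refine isProjection_of_enc G _ (fun x : Fin (q * q) × Fin 3 => W (c x.1) x.2)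
    (fun a b h => by
      obtain ⟨h1, h2⟩ := hinj (c a.1) (c b.1) a.2 b.2 h
      exact Prod.ext (hcinj h1) h2)
    (fun x => some (x.2, ψ x.2 x.1)) ?_ ?_ ?_
  · rintro ⟨γ, j⟩
    obtain ⟨i, hi1, -⟩ := hsolve γ (if γ = 0 then 1 else 0) (by split <;> simp_all) j j
    exact ⟨(i, γ), by show some (γ, ψ γ i) = some (γ, j); rw [hi1]⟩
  · rintro ⟨i, s⟩ ⟨i', s'⟩ ⟨γ, x⟩ ⟨γ', y⟩ hb hb' hna
    have hγγ : γ = γ' := by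
      by_contra hcon
      exact hna (by rw [completeTripartite_adj]; exact hcon)
    subst hγγ
    have hs : s = γ := congrArg Prod.fst (Option.some.inj hb)
    have hs' : s' = γ := congrArg Prod.fst (Option.some.inj hb')
    show ¬G.Adj (W (c i) s) (W (c i') s')
    rw [hs, hs']
    by_cases hii : i = i'
    · subst hii; exact G.loopless.irrefl _
    · exact hcross (c i) (c i') γ (fun h => hii (hcinj h))
  · rintro ⟨γ, x⟩ ⟨γ', y⟩ hadj'
    rw [completeTripartite_adj] at hadj'
    simp only at hadj'
    obtain ⟨i, hi1, hi2⟩ := hsolve γ γ' hadj' x y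
    exact ⟨(i, γ), (i, γ'), by show some (γ, ψ γ i) = some (γ, x); rw [hi1],
      by show some (γ', ψ γ' i) = some (γ', y); rw [hi2], htri (c i) γ γ' hadj'⟩

theorem proj_top_down {a b : ℕ} (h : a ≤ b) :
    IsProjection (⊤ : SimpleGraph (Fin b)) (⊤ : SimpleGraph (Fin a)) := by
  set f : Fin b → Option (Fin a) :=
    fun i => if hi : (i : ℕ) < a then some ⟨i, hi⟩ else none with hfdef
  have hfeval : ∀ (i : Fin b) (hi : (i : ℕ) < a), f i = some ⟨i, hi⟩ := by
    intro i hi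
    simp only [hfdef, dif_pos hi]
  have hinv : ∀ (i : Fin b) (x : Fin a), f i = some x → (i : ℕ) = (x : ℕ) := by
    intro i x hx
    simp only [hfdef] at hx
    split_ifs at hx with hc
    have := Option.some.inj hx
    rw [← this]
  refine ⟨f, ?_, ?_, ?_⟩
  · intro x
    refine ⟨⟨x, by omega⟩, ?_⟩
    rw [hfeval _ x.isLt]
  · intro i i' x hi hi' hadj
    have : i = i' := Fin.ext ((hinv _ _ hi).trans (hinv _ _ hi').symm)
    subst this
    exact (SimpleGraph.irrefl _) hadj
  · intro x x'
    constructor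
    · intro hxx
      have hne : x ≠ x' := (SimpleGraph.top_adj _ _).mp hxx
      refine ⟨⟨x, by omega⟩, ⟨x', by omega⟩, hfeval _ x.isLt, hfeval _ x'.isLt, ?_⟩
      rw [SimpleGraph.top_adj]
      intro hcon
      injection hcon with hv
      exact hne (Fin.ext hv)
    · rintro ⟨i, i', hi, hi', hadj⟩
      rw [SimpleGraph.top_adj] at hadj ⊢
      intro hcon
      apply hadj
      apply Fin.ext
      rw [hinv _ _ hi, hinv _ _ hi', hcon]

theorem proj_trip_down {a b : ℕ} (h : a ≤ b) :
    IsProjection (completeTripartite b) (completeTripartite a) := by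
  set f : Fin 3 × Fin b → Option (Fin 3 × Fin a) :=
    fun x => if hx : (x.2 : ℕ) < a then some (x.1, ⟨x.2, hx⟩) else none with hfdef
  have hfeval : ∀ (x : Fin 3 × Fin b) (hx : (x.2 : ℕ) < a), f x = some (x.1, ⟨x.2, hx⟩) := by
    intro x hx
    simp only [hfdef, dif_pos hx]
  have hinv : ∀ (x : Fin 3 × Fin b) (y : Fin 3 × Fin a), f x = some y → x.1 = y.1 := by
    intro x y hx
    simp only [hfdef] at hx
    split_ifs at hx with hc
    exact congrArg Prod.fst (Option.some.inj hx)
  refine ⟨f, ?_, ?_, ?_⟩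
  · rintro ⟨γ, j⟩
    refine ⟨(γ, ⟨j, by omega⟩), ?_⟩
    rw [hfeval (γ, ⟨j, by omega⟩) j.isLt]
  · intro u u' y hu hu' hadj
    rw [completeTripartite_adj] at hadj
    exact hadj ((hinv _ _ hu).trans (hinv _ _ hu').symm)
  · rintro ⟨γ, j⟩ ⟨γ', j'⟩
    constructor
    · intro hxx
      rw [completeTripartite_adj] at hxx
      exact ⟨(γ, ⟨j, by omega⟩), (γ', ⟨j', by omega⟩),
        hfeval (γ, ⟨j, by omega⟩) j.isLt, hfeval (γ', ⟨j', by omega⟩) j'.isLt, hxx⟩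
    · rintro ⟨u, u', hu, hu', hadj⟩
      rw [completeTripartite_adj] at hadj ⊢
      rw [← hinv _ _ hu, ← hinv _ _ hu']
      exact hadj

theorem preHom {C : Type} [Fintype C] [Nonempty C] :
    ∀ (m : ℕ) (S : Finset ℕ) (χ : ℕ → ℕ → C),
      (Fintype.card C + 1) ^ m ≤ S.card →
      ∃ (v : Fin m → ℕ) (d : Fin m → C), StrictMono v ∧ (∀ i, v i ∈ S) ∧
        ∀ i j : Fin m, i < j → χ (v i) (v j) = d i := by
  intro m
  induction m with
  | zero =>
    intro S χ _
    exact ⟨fun i => i.elim0, fun i => i.elim0, fun i => i.elim0,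
      fun i => i.elim0, fun i => i.elim0⟩
  | succ m ih =>
    intro S χ hS
    classical
    have hc1 : 1 ≤ Fintype.card C := Fintype.card_pos
    have hpow : 1 ≤ (Fintype.card C + 1) ^ m := Nat.one_le_pow _ _ (by omega)
    have hSpos : 0 < S.card := by
      have : 1 ≤ (Fintype.card C + 1) ^ (m + 1) := Nat.one_le_pow _ _ (by omega)
      omega
    have hne : S.Nonempty := Finset.card_pos.mp hSpos
    set x := S.min' hne with hx
    set T := S.erase x with hT
    have hTcard : T.card = S.card - 1 := Finset.card_erase_of_mem (S.min'_mem hne)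
    have hcard : (Finset.univ : Finset C).card * ((Fintype.card C + 1) ^ m) ≤ T.card := by
      rw [Finset.card_univ, hTcard]
      have hexp : (Fintype.card C + 1) ^ (m + 1)
          = (Fintype.card C) * (Fintype.card C + 1) ^ m + (Fintype.card C + 1) ^ m := by
        rw [pow_succ]
        ring
      rw [hexp] at hS
      omega
    obtain ⟨col, -, hcol⟩ := Finset.exists_le_card_fiber_of_mul_le_card_of_maps_to
      (fun a (_ : a ∈ T) => Finset.mem_univ (χ x a))
      ⟨Classical.arbitrary C, Finset.mem_univ _⟩ hcard
    obtain ⟨v, d, hmono, hmem, hcolor⟩ :=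
      ih (T.filter (fun a => χ x a = col)) χ hcol
    have hvT : ∀ i, v i ∈ T ∧ χ x (v i) = col := by
      intro i
      have := hmem i
      rw [Finset.mem_filter] at this
      exact this
    have hgt : ∀ i, x < v i := by
      intro i
      have h1 : v i ∈ S := Finset.mem_of_mem_erase (hvT i).1
      have h2 : v i ≠ x := Finset.ne_of_mem_erase (hvT i).1
      have := S.min'_le (v i) h1
      omega
    refine ⟨Fin.cons x v, Fin.cons col d, ?_, ?_, ?_⟩
    · intro a b hab
      rcases Fin.eq_zero_or_eq_succ a with rfl | ⟨a', rfl⟩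
      · rcases Fin.eq_zero_or_eq_succ b with rfl | ⟨b', rfl⟩
        · exact absurd hab (lt_irrefl _)
        · simpa using hgt b'
      · rcases Fin.eq_zero_or_eq_succ b with rfl | ⟨b', rfl⟩
        · exact absurd hab (by simp [Fin.lt_iff_val_lt_val])
        · simp only [Fin.cons_succ]
          exact hmono (by simpa [Fin.succ_lt_succ_iff] using hab)
    · intro i
      rcases Fin.eq_zero_or_eq_succ i with rfl | ⟨i', rfl⟩
      · simpa using S.min'_mem hne
      · simp only [Fin.cons_succ]
        exact Finset.mem_of_mem_erase (hvT i').1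
    · intro i j hij
      rcases Fin.eq_zero_or_eq_succ i with rfl | ⟨i', rfl⟩
      · rcases Fin.eq_zero_or_eq_succ j with rfl | ⟨j', rfl⟩
        · exact absurd hij (lt_irrefl _)
        · simp only [Fin.cons_succ, Fin.cons_zero]
          exact (hvT j').2
      · rcases Fin.eq_zero_or_eq_succ j with rfl | ⟨j', rfl⟩
        · exact absurd hij (by simp [Fin.lt_iff_val_lt_val])
        · simp only [Fin.cons_succ]
          exact hcolor i' j' (by simpa [Fin.succ_lt_succ_iff] using hij)

theorem ramsey (C : Type) [Fintype C] [Nonempty C] (k : ℕ) :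
    ∃ n : ℕ, ∀ χ : ℕ → ℕ → C, ∃ (u : Fin k → ℕ) (col : C),
      StrictMono u ∧ (∀ i, u i < n) ∧ ∀ i j : Fin k, i < j → χ (u i) (u j) = col := by
  classical
  set c := Fintype.card C with hcdef
  set m := c * k + 1 with hmdef
  refine ⟨(c + 1) ^ m, fun χ => ?_⟩
  obtain ⟨v, d, hmono, hmem, hcol⟩ := preHom m (Finset.range ((c + 1) ^ m)) χ (by simp [hcdef])
  have hcard : (Finset.univ : Finset C).card * k ≤ (Finset.univ : Finset (Fin m)).card := by
    rw [Finset.card_univ, Finset.card_univ, Fintype.card_fin, ← hcdef]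
    omega
  obtain ⟨col, -, hge⟩ := Finset.exists_le_card_fiber_of_mul_le_card_of_maps_to
    (fun (a : Fin m) (_ : a ∈ Finset.univ) => Finset.mem_univ (d a))
    ⟨Classical.arbitrary C, Finset.mem_univ _⟩ hcard
  set s := Finset.univ.filter (fun i : Fin m => d i = col) with hsdef
  set g := s.orderEmbOfCardLe hge with hgdef
  have hgs : ∀ a, g a ∈ s := fun a => s.orderEmbOfCardLe_mem hge a
  refine ⟨fun i => v (g i), col, ?_, ?_, ?_⟩
  · exact hmono.comp g.strictMono
  · intro i
    have := hmem (g i)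
    rwa [Finset.mem_range] at this
  · intro i j hij
    rw [hcol (g i) (g j) (g.strictMono hij)]
    have := hgs i
    rw [hsdef, Finset.mem_filter] at this
    exact this.2

def ObsTri {V : Type*} (H : SimpleGraph V) (x y z : V) : Prop :=
  H.Adj x y ∧ H.Adj y z ∧ H.Adj x z

def ObsP4 {V : Type*} (H : SimpleGraph V) (a b c d : V) : Prop :=
  H.Adj a b ∧ H.Adj b c ∧ H.Adj c d ∧ ¬H.Adj a c ∧ ¬H.Adj a d ∧ ¬H.Adj b d

def Obs2K2 {V : Type*} (H : SimpleGraph V) (a b c d : V) : Prop :=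
  H.Adj a b ∧ H.Adj c d ∧ ¬H.Adj a c ∧ ¬H.Adj a d ∧ ¬H.Adj b c ∧ ¬H.Adj b d

theorem ObsP4.distinct {V : Type*} {H : SimpleGraph V} {a b c d : V}
    (h : ObsP4 H a b c d) :
    a ≠ b ∧ a ≠ c ∧ a ≠ d ∧ b ≠ c ∧ b ≠ d ∧ c ≠ d := by
  obtain ⟨h1, h2, h3, n1, n2, n3⟩ := h
  refine ⟨h1.ne, ?_, ?_, h2.ne, ?_, h3.ne⟩
  · rintro rfl; exact n2 h3
  · rintro rfl; exact n3 h1.symm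
  · rintro rfl; exact n2 h1

theorem Obs2K2.distinct {V : Type*} {H : SimpleGraph V} {a b c d : V}
    (h : Obs2K2 H a b c d) :
    a ≠ b ∧ a ≠ c ∧ a ≠ d ∧ b ≠ c ∧ b ≠ d ∧ c ≠ d := by
  obtain ⟨h1, h2, n1, n2, n3, n4⟩ := h
  refine ⟨h1.ne, ?_, ?_, ?_, ?_, h2.ne⟩
  · rintro rfl; exact n2 h2
  · rintro rfl; exact n1 h2.symm
  · rintro rfl; exact n1 h1
  · rintro rfl; exact n2 h1

theorem exists_obs_of_not_biclique {V : Type*} {H : SimpleGraph V}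
    (h : ¬ IsExtendedBiclique H) :
    (∃ x y z, ObsTri H x y z) ∨ (∃ a b c d, ObsP4 H a b c d) ∨
      (∃ a b c d, Obs2K2 H a b c d) := by
  by_contra hno
  push_neg at hno
  obtain ⟨hT, hP, hK⟩ := hno
  apply h
  by_cases hE : ∃ u v, H.Adj u v
  · obtain ⟨u, v, huv⟩ := hE
    have hdisj : Disjoint {x | H.Adj v x} {x | H.Adj u x} := by
      rw [Set.disjoint_left]
      intro a hav hau
      exact hT u v a ⟨huv, hav, hau⟩
    refine ⟨{x | H.Adj v x}, {x | H.Adj u x}, hdisj, ?_⟩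
    intro a b
    simp only [Set.mem_setOf_eq]
    constructor
    · intro hab
      by_cases hva : H.Adj v a
      · -- a ∈ A; show b ∈ B
        left
        refine ⟨hva, ?_⟩
        have hvb : ¬ H.Adj v b := fun hvb => hT v a b ⟨hva, hab, hvb⟩
        by_cases hbv : b = v
        · subst hbv; exact huv
        by_cases hub : H.Adj u b
        · exact hub
        exfalso
        by_cases hau : a = u
        · subst hau; exact hub hab
        have hua : ¬ H.Adj u a := fun hua => hT u v a ⟨huv, hva, hua⟩
        exact hP b a v u ⟨hab.symm, hva.symm, huv.symm, fun hc => hvb hc.symm,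
          fun hc => hub hc.symm, fun hc => hua hc.symm⟩
      · by_cases hua : H.Adj u a
        · -- a ∈ B; show b ∈ A
          right
          refine ⟨hua, ?_⟩
          have hub : ¬ H.Adj u b := fun hub => hT u a b ⟨hua, hab, hub⟩
          by_cases hbu : b = u
          · subst hbu; exact huv.symm
          by_cases hvb : H.Adj v b
          · exact hvb
          exfalso
          by_cases hav : a = v
          · subst hav; exact hvb hab
          exact hP b a u v ⟨hab.symm, hua.symm, huv, fun hc => hub hc.symm,
            fun hc => hvb hc.symm, fun hc => hva hc.symm⟩
        · -- a ∉ A ∪ B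
          exfalso
          by_cases hvb : H.Adj v b
          · have hub : ¬ H.Adj u b := fun hub => hT u v b ⟨huv, hvb, hub⟩
            exact hP a b v u ⟨hab, hvb.symm, huv.symm, fun hc => hva hc.symm,
              fun hc => hua hc.symm, fun hc => hub hc.symm⟩
          by_cases hub : H.Adj u b
          · exact hP a b u v ⟨hab, hub.symm, huv, fun hc => hua hc.symm,
              fun hc => hva hc.symm, fun hc => hvb hc.symm⟩
          · exact hK a b u v ⟨hab, huv, fun hc => hua hc.symm, fun hc => hva hc.symm,
              fun hc => hub hc.symm, fun hc => hvb hc.symm⟩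
    · rintro (⟨hva, hub⟩ | ⟨hua, hvb⟩)
      · by_cases hau : a = u
        · subst hau; exact hub
        by_cases hbv : b = v
        · subst hbv; exact hva.symm
        by_contra hab
        have hua : ¬ H.Adj u a := fun hc => hT u v a ⟨huv, hva, hc⟩
        have hvb : ¬ H.Adj v b := fun hc => hT u v b ⟨huv, hc, hub⟩
        exact hP a v u b ⟨hva.symm, huv.symm, hub, fun hc => hua hc.symm, hab, hvb⟩
      · by_cases hav : a = v
        · subst hav; exact hvb
        by_cases hbu : b = u
        · subst hbu; exact hua.symm
        by_contra hab
        have hva : ¬ H.Adj v a := fun hc => hT u v a ⟨huv, hc, hua⟩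
        have hub : ¬ H.Adj u b := fun hc => hT u v b ⟨huv, hvb, hc⟩
        exact hP a u v b ⟨hua.symm, huv, hvb, fun hc => hva hc.symm, hab, hub⟩
  · push_neg at hE
    exact ⟨∅, ∅, Set.disjoint_empty _, fun a b => by
      simp only [Set.mem_empty_iff_false, false_and, and_false, or_self, iff_false]
      exact hE a b⟩

def ObsAt {α : Type*} (G : SimpleGraph α) (o : Fin 3 × (Fin 4 → α)) : Prop :=
  (o.1 = 0 ∧ ObsTri G (o.2 0) (o.2 1) (o.2 2) ∧ o.2 3 = o.2 0) ∨
  (o.1 = 1 ∧ ObsP4 G (o.2 0) (o.2 1) (o.2 2) (o.2 3)) ∨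
  (o.1 = 2 ∧ Obs2K2 G (o.2 0) (o.2 1) (o.2 2) (o.2 3))

def mkW {α : Type*} (a b c d : α) : Fin 4 → α := fun s =>
  if s = 0 then a else if s = 1 then b else if s = 2 then c else d

theorem mkW0 {α : Type*} (a b c d : α) : mkW a b c d 0 = a := rfl
theorem mkW1 {α : Type*} (a b c d : α) : mkW a b c d 1 = b := rfl
theorem mkW2 {α : Type*} (a b c d : α) : mkW a b c d 2 = c := rfl
theorem mkW3 {α : Type*} (a b c d : α) : mkW a b c d 3 = d := rfl

theorem extract_obs {α : Type} (G : SimpleGraph α) :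
    ∀ (N : ℕ) (S : Finset α),
      (∀ S' : Finset α, S ⊆ S' → S'.card ≤ S.card + 4 * N →
        ¬ IsExtendedBiclique (G.induce ((↑S' : Set α)ᶜ))) →
      ∃ O : Fin N → Fin 3 × (Fin 4 → α),
        (∀ i, ObsAt G (O i)) ∧
        (∀ i s, (O i).2 s ∉ S) ∧
        (∀ i j, i ≠ j → ∀ s t, (O i).2 s ≠ (O j).2 t) := by
  intro N
  induction N with
  | zero =>
    intro S _
    exact ⟨fun i => i.elim0, fun i => i.elim0, fun i => i.elim0,
      fun i j _ => i.elim0⟩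
  | succ N ih =>
    intro S hS
    classical
    have h0 : ¬ IsExtendedBiclique (G.induce ((↑S : Set α)ᶜ)) :=
      hS S (Finset.Subset.refl S) (by omega)
    have hstep : ∃ tw : Fin 3 × (Fin 4 → α), ObsAt G tw ∧ ∀ s, tw.2 s ∉ S := by
      have hmemc : ∀ x : ((↑S : Set α)ᶜ : Set α), (x : α) ∉ S := by
        intro x
        have := x.property
        rw [Set.mem_compl_iff] at this
        intro hc
        exact this (Finset.mem_coe.mpr hc)
      rcases exists_obs_of_not_biclique h0 with ⟨x, y, z, ht⟩ | ⟨a, b, c, d, hp⟩ |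
        ⟨a, b, c, d, hk⟩
      · refine ⟨(0, mkW (↑x) (↑y) (↑z) (↑x)), Or.inl ⟨rfl, ?_, rfl⟩, ?_⟩
        · exact ⟨ht.1, ht.2.1, ht.2.2⟩
        · intro s
          fin_cases s <;> simp only [mkW0, mkW1, mkW2, mkW3] <;> exact hmemc _
      · refine ⟨(1, mkW (↑a) (↑b) (↑c) (↑d)), Or.inr (Or.inl ⟨rfl, ?_⟩), ?_⟩
        · exact hp
        · intro s
          fin_cases s <;> simp only [mkW0, mkW1, mkW2, mkW3] <;> exact hmemc _
      · refine ⟨(2, mkW (↑a) (↑b) (↑c) (↑d)), Or.inr (Or.inr ⟨rfl, ?_⟩), ?_⟩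
        · exact hk
        · intro s
          fin_cases s <;> simp only [mkW0, mkW1, mkW2, mkW3] <;> exact hmemc _
    obtain ⟨tw, htw, hnS⟩ := hstep
    set P := S ∪ {tw.2 0, tw.2 1, tw.2 2, tw.2 3} with hPdef
    have hPcard : P.card ≤ S.card + 4 := by
      rw [hPdef]
      have c0 := Finset.card_union_le S ({tw.2 0, tw.2 1, tw.2 2, tw.2 3} : Finset α)
      have c1 := Finset.card_insert_le (tw.2 0) ({tw.2 1, tw.2 2, tw.2 3} : Finset α)
      have c2 := Finset.card_insert_le (tw.2 1) ({tw.2 2, tw.2 3} : Finset α)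
      have c3 := Finset.card_insert_le (tw.2 2) ({tw.2 3} : Finset α)
      have c4 : ({tw.2 3} : Finset α).card = 1 := Finset.card_singleton _
      omega
    have hSP : S ⊆ P := Finset.subset_union_left
    obtain ⟨O, hO1, hO2, hO3⟩ := ih P (by
      intro S'' hsub hcard
      exact hS S'' (hSP.trans hsub) (by omega))
    have htwP : ∀ s : Fin 4, tw.2 s ∈ P := by
      intro s
      apply Finset.mem_union_right
      fin_cases s <;> simp
    refine ⟨Fin.cons tw O, ?_, ?_, ?_⟩
    · intro i
      rcases Fin.eq_zero_or_eq_succ i with rfl | ⟨i', rfl⟩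
      · simpa using htw
      · simpa using hO1 i'
    · intro i s
      rcases Fin.eq_zero_or_eq_succ i with rfl | ⟨i', rfl⟩
      · simpa using hnS s
      · simp only [Fin.cons_succ]
        exact fun hc => hO2 i' s (hSP hc)
    · intro i j hij s t
      rcases Fin.eq_zero_or_eq_succ i with rfl | ⟨i', rfl⟩ <;>
        rcases Fin.eq_zero_or_eq_succ j with rfl | ⟨j', rfl⟩
      · exact absurd rfl hij
      · simp only [Fin.cons_zero, Fin.cons_succ]
        intro heq
        exact hO2 j' t (heq ▸ htwP s)
      · simp only [Fin.cons_zero, Fin.cons_succ]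
        intro heq
        exact hO2 i' s (heq.symm ▸ htwP t)
      · simp only [Fin.cons_succ]
        exact hO3 i' j' (fun hc => hij (congrArg Fin.succ hc)) s t

def inE (s t : Fin 4) : Prop :=
  (s = 0 ∧ t = 1) ∨ (s = 1 ∧ t = 0) ∨ (s = 2 ∧ t = 3) ∨ (s = 3 ∧ t = 2)

instance : ∀ s t, Decidable (inE s t) := fun s t => by unfold inE; infer_instance

def inP (s t : Fin 4) : Prop :=
  (s = 0 ∧ t = 1) ∨ (s = 1 ∧ t = 0) ∨ (s = 1 ∧ t = 2) ∨ (s = 2 ∧ t = 1) ∨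
    (s = 2 ∧ t = 3) ∨ (s = 3 ∧ t = 2)

instance : ∀ s t, Decidable (inP s t) := fun s t => by unfold inP; infer_instance

/-- If `𝒞` is a projection-closed class of (finite) graphs, then either `𝒞` contains
`K_t` for every `t ≥ 1`, or `𝒞` contains `K_{t,t,t}` for every `t ≥ 1`, or there is a
`μ ≥ 0` such that every graph in `𝒞` has distance at most `μ` to extended bicliques. -/
theorem stmt12 (𝒞 : ∀ α : Type, SimpleGraph α → Prop)
    (hclosed : ∀ (α β : Type) [Fintype α] [Fintype β]
      (H : SimpleGraph α) (H' : SimpleGraph β), 𝒞 α H → IsProjection H H' → 𝒞 β H') :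
    (∀ t : ℕ, 1 ≤ t → 𝒞 (Fin t) (⊤ : SimpleGraph (Fin t))) ∨
    (∀ t : ℕ, 1 ≤ t → 𝒞 (Fin 3 × Fin t) (completeTripartite t)) ∨
    (∃ μ : ℕ, ∀ (α : Type) [Fintype α] (H : SimpleGraph α), 𝒞 α H →
      ∃ S : Finset α, S.card ≤ μ ∧ IsExtendedBiclique (H.induce ((↑S : Set α)ᶜ))) := by
  classical
  by_cases hopt1 : ∀ t : ℕ, 1 ≤ t → 𝒞 (Fin t) (⊤ : SimpleGraph (Fin t))
  · exact Or.inl hopt1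
  by_cases hopt2 : ∀ t : ℕ, 1 ≤ t → 𝒞 (Fin 3 × Fin t) (completeTripartite t)
  · exact Or.inr (Or.inl hopt2)
  push_neg at hopt1 hopt2
  obtain ⟨t1, ht1, hK1⟩ := hopt1
  obtain ⟨t2, ht2, hT2⟩ := hopt2
  set p := max t1 2 with hpdef
  have hp2 : 2 ≤ p := le_max_right _ _
  have hpt1 : t1 ≤ p := le_max_left _ _
  set q := t2 with hqdef
  have hq1 : 1 ≤ q := ht2
  set K := p + p * p + 2 * q + q * q + 2 with hKdef
  have hsz1 : t1 ≤ K + 1 := by omega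
  have hsz2 : t1 ≤ K := by omega
  have hszp : p * p ≤ K + 1 := by omega
  have hszq2 : 2 * q ≤ K + 1 := by omega
  have hszqq : q * q ≤ K + 1 := by omega
  obtain ⟨n, hn⟩ := ramsey (Fin 4 → Fin 4 → Bool) (K + 1)
  refine Or.inr (Or.inr ⟨4 * (3 * n), ?_⟩)
  intro α _ G hG
  by_contra hcon
  push_neg at hcon
  obtain ⟨O, hO1, -, hO3⟩ := extract_obs G (3 * n) ∅ (by
    intro S' _ hcard
    exact hcon S' (by simpa using hcard))
  have haveK : ∀ (m : ℕ), t1 ≤ m → IsProjection G (⊤ : SimpleGraph (Fin m)) → False := by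
    intro m hm hproj
    have h1 : 𝒞 (Fin m) (⊤ : SimpleGraph (Fin m)) := hclosed α (Fin m) G ⊤ hG hproj
    exact hK1 (hclosed (Fin m) (Fin t1) ⊤ ⊤ h1 (proj_top_down hm))
  have haveT : ∀ (m : ℕ), t2 ≤ m → IsProjection G (completeTripartite m) → False := by
    intro m hm hproj
    have h1 : 𝒞 (Fin 3 × Fin m) (completeTripartite m) :=
      hclosed α (Fin 3 × Fin m) G (completeTripartite m) hG hproj
    exact hT2 (hclosed (Fin 3 × Fin m) (Fin 3 × Fin t2) _ _ h1 (proj_trip_down hm))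
  have h3n : ((Finset.univ : Finset (Fin 3)).card) * n
      ≤ (Finset.univ : Finset (Fin (3 * n))).card := by simp
  obtain ⟨ty, -, hty⟩ := Finset.exists_le_card_fiber_of_mul_le_card_of_maps_to
    (fun (a : Fin (3 * n)) (_ : a ∈ Finset.univ) => Finset.mem_univ ((O a).1))
    ⟨0, Finset.mem_univ _⟩ h3n
  set s0 := Finset.univ.filter (fun i : Fin (3 * n) => (O i).1 = ty) with hs0
  set emb := s0.orderEmbOfCardLe hty with hembdef
  have hembs : ∀ a, (O (emb a)).1 = ty := by
    intro a
    have h := s0.orderEmbOfCardLe_mem hty a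
    exact (Finset.mem_filter.mp h).2
  set w : Fin n → Fin 4 → α := fun i => (O (emb i)).2 with hwdef
  have hwdisj : ∀ i j, i ≠ j → ∀ s t, w i s ≠ w j t := by
    intro i j hij s t
    exact hO3 (emb i) (emb j) (fun hc => hij (emb.injective hc)) s t
  set χ : ℕ → ℕ → (Fin 4 → Fin 4 → Bool) := fun i j =>
    if hi : i < n then if hj : j < n then
      (fun s t => decide (G.Adj (w ⟨i, hi⟩ s) (w ⟨j, hj⟩ t))) else (fun _ _ => false)
    else (fun _ _ => false) with hχdef
  obtain ⟨u, B, humono, hult, hucol⟩ := hn χ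
  set W : Fin (K + 1) → Fin 4 → α := fun i => w ⟨u i, hult i⟩ with hWdef
  have hB : ∀ i j : Fin (K + 1), i < j → ∀ s t,
      (G.Adj (W i s) (W j t) ↔ B s t = true) := by
    intro i j hij s t
    have hc := hucol i j hij
    simp only [hχdef] at hc
    rw [dif_pos (hult i), dif_pos (hult j)] at hc
    have hfun := congrFun (congrFun hc s) t
    constructor
    · intro hadj
      rw [← hfun]
      exact decide_eq_true hadj
    · intro hbt
      rw [← hfun] at hbt
      exact of_decide_eq_true hbt
  have hWdisj : ∀ i j : Fin (K + 1), i ≠ j → ∀ s t, W i s ≠ W j t := by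
    intro i j hij s t
    refine hwdisj ⟨u i, hult i⟩ ⟨u j, hult j⟩ ?_ s t
    intro hc
    apply hij
    apply humono.injective
    injection hc
  have hwobs : ∀ i : Fin (K + 1), ObsAt G (O (emb ⟨u i, hult i⟩)) :=
    fun i => hO1 (emb ⟨u i, hult i⟩)
  have htyW : ∀ i : Fin (K + 1), (O (emb ⟨u i, hult i⟩)).1 = ty :=
    fun i => hembs ⟨u i, hult i⟩
  have toF : ∀ {b : Bool}, ¬ b = true → b = false := fun {b} h => by simpa using h
  -- generic case builders
  have diagCase : ∀ s : Fin 4, B s s = true → False := by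
    intro s hs
    refine haveK (K + 1) hsz1 (proj_top_of_clique (fun i => W i s) ?_ ?_)
    · intro i j h
      by_contra hc
      exact hWdisj i j hc s s h
    · intro i j hij
      rcases lt_or_gt_of_ne hij with h | h
      · exact (hB i j h s s).mpr hs
      · exact ((hB j i h s s).mpr hs).symm
  have pairCase : ∀ s t : Fin 4, (∀ i, W i s ≠ W i t) →
      (∀ i, ¬ G.Adj (W i s) (W i t)) → B s t = true → False := by
    intro s t hne hnadj hbit
    refine haveK (K + 1) hsz1 (proj_top_of_pairs (fun i => W i s) (fun i => W i t)
      ?_ ?_ ?_ hnadj ?_)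
    · intro i j h
      by_contra hc
      exact hWdisj i j hc s s h
    · intro i j h
      by_contra hc
      exact hWdisj i j hc t t h
    · intro i j
      by_cases hij : i = j
      · subst hij; exact hne i
      · exact hWdisj i j hij s t
    · intro i j hij
      exact (hB i j hij s t).mpr hbit
  have noAdj : ∀ (a b : Fin 4) (i j : Fin (K + 1)), i ≠ j → B a b = false →
      B b a = false → ¬ G.Adj (W i a) (W j b) := by
    intro a b i j hij hab hba hadj
    rcases lt_or_gt_of_ne hij with h | h
    · have := (hB i j h a b).mp hadj
      rw [hab] at this
      exact Bool.false_ne_true this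
    · have := (hB j i h b a).mp hadj.symm
      rw [hba] at this
      exact Bool.false_ne_true this
  have halfCase : ∀ s t : Fin 4, (∀ i, G.Adj (W i s) (W i t)) → B s t = true →
      ¬ B t s = true → False := by
    intro s t hwadj h1 h0
    refine haveK K hsz2 (proj_top_of_pairs (fun j : Fin K => W j.succ s)
      (fun j : Fin K => W j.castSucc t) ?_ ?_ ?_ ?_ ?_)
    · intro i j h
      by_contra hc
      exact hWdisj i.succ j.succ (fun he => hc (Fin.succ_injective _ he)) s s h
    · intro i j h
      by_contra hc
      exact hWdisj i.castSucc j.castSucc (fun he => hc (Fin.castSucc_injective _ he)) t t h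
    · intro i j
      show W i.succ s ≠ W j.castSucc t
      by_cases he : i.succ = j.castSucc
      · rw [he]
        exact (hwadj j.castSucc).ne
      · exact hWdisj _ _ he s t
    · intro j hadj
      have := (hB j.castSucc j.succ (Fin.castSucc_lt_succ (i := j)) t s).mp hadj.symm
      exact h0 this
    · intro j j' hjj
      show G.Adj (W j.succ s) (W j'.castSucc t)
      have hv : (j : ℕ) < (j' : ℕ) := hjj
      by_cases he : (j : ℕ) + 1 = (j' : ℕ)
      · have heq : j.succ = j'.castSucc := by
          apply Fin.ext
          simp only [Fin.val_succ, Fin.coe_castSucc]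
          exact he
        rw [heq]
        exact hwadj j'.castSucc
      · refine (hB j.succ j'.castSucc ?_ s t).mpr h1
        rw [Fin.lt_def]
        simp only [Fin.val_succ, Fin.coe_castSucc]
        omega
  have matchCase : ∀ s t : Fin 4, (∀ i, G.Adj (W i s) (W i t)) → B s t = false →
      B t s = false → B s s = false → B t t = false → False := by
    intro s t hwadj hst hts hss htt
    refine haveK p hpt1 (proj_top_of_matching hp2 hszp
      (fun i => W i s) (fun i => W i t) ?_ ?_ ?_ (fun i => hwadj i) ?_)
    · intro i j h
      by_contra hc
      exact hWdisj i j hc s s h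
    · intro i j h
      by_contra hc
      exact hWdisj i j hc t t h
    · intro i j
      show W i s ≠ W j t
      by_cases hij : i = j
      · subst hij
        exact (hwadj i).ne
      · exact hWdisj i j hij s t
    · intro i j hij
      exact ⟨noAdj s s i j hij hss hss, noAdj s t i j hij hst hts,
        noAdj t t i j hij htt htt⟩
  have tripCase : ∀ (R : Fin 4 → Fin 4 → Prop), (∀ s t, R s t → R t s) →
      (∀ s t, (B s t = true) ↔ R s t) →
      (∀ i (s t : Fin 4), s ≠ t → (G.Adj (W i s) (W i t) ↔ R s t)) →
      (∀ i (s t : Fin 4), s ≠ t → W i s ≠ W i t) →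
      ∀ (L : Fin 3 → Fin 2 → Fin 4), (∀ e e', L 0 e ≠ L 1 e') →
      (∀ c e e', ¬ R (L c e) (L c e')) →
      (∀ c c', c ≠ c' → ∃ e e', R (L c e) (L c' e')) → False := by
    intro R hRsymm hBiff hwiff hwd L hL hind hrich
    have hinjW : ∀ (i i' : Fin (K + 1)) (s t : Fin 4),
        W i s = W i' t → i = i' ∧ s = t := by
      intro i i' s t h
      by_cases hii : i = i'
      · subst hii
        by_cases hst : s = t
        · exact ⟨rfl, hst⟩
        · exact absurd h (hwd i s t hst)
      · exact absurd h (hWdisj i i' hii s t)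
    have hadjR : ∀ i i' s t, ¬(i = i' ∧ s = t) →
        (G.Adj (W i s) (W i' t) ↔ R s t) := by
      intro i i' s t hne
      rcases lt_trichotomy i i' with h | h | h
      · rw [hB i i' h s t]
        exact hBiff s t
      · subst h
        exact hwiff i s t (fun hc => hne ⟨rfl, hc⟩)
      · constructor
        · intro hadj
          exact hRsymm t s ((hBiff t s).mp ((hB i' i h t s).mp hadj.symm))
        · intro hR
          exact ((hB i' i h t s).mpr ((hBiff t s).mpr (hRsymm s t hR))).symm
    exact haveT q le_rfl (proj_trip_of_blocks hszq2 W hinjW R hadjR L hL hind hrich)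
  have htyEq : ∀ i : Fin (K + 1),
      (O (emb ⟨u i, hult i⟩)).1 = (O (emb ⟨u 0, hult 0⟩)).1 :=
    fun i => (hembs _).trans (hembs _).symm
  rcases hwobs 0 with ⟨hty0, -⟩ | ⟨hty0, -⟩ | ⟨hty0, -⟩
  · -- triangle type
    have hpat : ∀ i : Fin (K + 1), ObsTri G (W i 0) (W i 1) (W i 2) := by
      intro i
      rcases hwobs i with ⟨-, h2, -⟩ | ⟨htyi, -⟩ | ⟨htyi, -⟩
      · exact h2
      · rw [htyEq i, hty0] at htyi
        exact absurd htyi (by decide)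
      · rw [htyEq i, hty0] at htyi
        exact absurd htyi (by decide)
    by_cases h00 : B 0 0 = true
    · exact diagCase 0 h00
    by_cases h11 : B 1 1 = true
    · exact diagCase 1 h11
    by_cases h22 : B 2 2 = true
    · exact diagCase 2 h22
    refine haveT q le_rfl (proj_trip_of_triangles hq1 hszqq
      (fun i (s : Fin 3) => W i ⟨(s : ℕ), by omega⟩) ?_ ?_ ?_)
    · intro i i' s t h
      by_cases hii : i = i'
      · subst hii
        obtain ⟨a1, a2, a3⟩ := hpat i
        refine ⟨rfl, ?_⟩
        fin_cases s <;> fin_cases t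
        · rfl
        · exact absurd h a1.ne
        · exact absurd h a3.ne
        · exact absurd h.symm a1.ne
        · rfl
        · exact absurd h a2.ne
        · exact absurd h.symm a3.ne
        · exact absurd h.symm a2.ne
        · rfl
      · exact absurd h (hWdisj i i' hii _ _)
    · intro i s t hst
      obtain ⟨a1, a2, a3⟩ := hpat i
      fin_cases s <;> fin_cases t
      · exact absurd rfl hst
      · exact a1
      · exact a3
      · exact a1.symm
      · exact absurd rfl hst
      · exact a2
      · exact a3.symm
      · exact a2.symm
      · exact absurd rfl hst
    · intro i i' s hii
      fin_cases s
      · exact noAdj 0 0 i i' hii (toF h00) (toF h00)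
      · exact noAdj 1 1 i i' hii (toF h11) (toF h11)
      · exact noAdj 2 2 i i' hii (toF h22) (toF h22)
  · -- P4 type
    have hpat : ∀ i : Fin (K + 1), ObsP4 G (W i 0) (W i 1) (W i 2) (W i 3) := by
      intro i
      rcases hwobs i with ⟨htyi, -⟩ | ⟨-, h2⟩ | ⟨htyi, -⟩
      · rw [htyEq i, hty0] at htyi
        exact absurd htyi (by decide)
      · exact h2
      · rw [htyEq i, hty0] at htyi
        exact absurd htyi (by decide)
    have hwd : ∀ i, ∀ s t : Fin 4, s ≠ t → W i s ≠ W i t := by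
      intro i s t hst
      obtain ⟨d1, d2, d3, d4, d5, d6⟩ := (hpat i).distinct
      fin_cases s <;> fin_cases t <;>
        first
          | exact absurd rfl hst
          | exact d1 | exact d2 | exact d3 | exact d4 | exact d5 | exact d6
          | exact d1.symm | exact d2.symm | exact d3.symm | exact d4.symm
          | exact d5.symm | exact d6.symm
    have hwE : ∀ i (s t : Fin 4), inP s t → G.Adj (W i s) (W i t) := by
      intro i s t hin
      obtain ⟨a1, a2, a3, -, -, -⟩ := hpat i
      rcases hin with ⟨rfl, rfl⟩ | ⟨rfl, rfl⟩ | ⟨rfl, rfl⟩ | ⟨rfl, rfl⟩ |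
        ⟨rfl, rfl⟩ | ⟨rfl, rfl⟩
      · exact a1
      · exact a1.symm
      · exact a2
      · exact a2.symm
      · exact a3
      · exact a3.symm
    have hwN : ∀ i (s t : Fin 4), s ≠ t → ¬ inP s t → ¬ G.Adj (W i s) (W i t) := by
      intro i s t hst hnin
      obtain ⟨-, -, -, n1, n2, n3⟩ := hpat i
      fin_cases s <;> fin_cases t <;>
        first
          | exact absurd rfl hst
          | exact absurd (by decide) hnin
          | exact n1 | exact n2 | exact n3
          | exact fun h => n1 h.symm
          | exact fun h => n2 h.symm
          | exact fun h => n3 h.symm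
    by_cases h00 : B 0 0 = true
    · exact diagCase 0 h00
    by_cases h11 : B 1 1 = true
    · exact diagCase 1 h11
    by_cases h22 : B 2 2 = true
    · exact diagCase 2 h22
    by_cases h33 : B 3 3 = true
    · exact diagCase 3 h33
    by_cases h02 : B 0 2 = true
    · exact pairCase 0 2 (fun i => hwd i 0 2 (by decide))
        (fun i => hwN i 0 2 (by decide) (by decide)) h02
    by_cases h20 : B 2 0 = true
    · exact pairCase 2 0 (fun i => hwd i 2 0 (by decide))
        (fun i => hwN i 2 0 (by decide) (by decide)) h20
    by_cases h03 : B 0 3 = true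
    · exact pairCase 0 3 (fun i => hwd i 0 3 (by decide))
        (fun i => hwN i 0 3 (by decide) (by decide)) h03
    by_cases h30 : B 3 0 = true
    · exact pairCase 3 0 (fun i => hwd i 3 0 (by decide))
        (fun i => hwN i 3 0 (by decide) (by decide)) h30
    by_cases h13 : B 1 3 = true
    · exact pairCase 1 3 (fun i => hwd i 1 3 (by decide))
        (fun i => hwN i 1 3 (by decide) (by decide)) h13
    by_cases h31 : B 3 1 = true
    · exact pairCase 3 1 (fun i => hwd i 3 1 (by decide))
        (fun i => hwN i 3 1 (by decide) (by decide)) h31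
    by_cases h01 : B 0 1 = true
    · by_cases h10 : B 1 0 = true
      · by_cases h12 : B 1 2 = true
        · by_cases h21 : B 2 1 = true
          · by_cases h23 : B 2 3 = true
            · by_cases h32 : B 3 2 = true
              · refine tripCase inP (by decide) ?_ ?_ hwd
                  ![![0, 2], ![1, 3], ![0, 3]] (by decide) (by decide) (by decide)
                · intro s t
                  constructor
                  · intro hbt
                    by_cases hst : s = t
                    · exfalso
                      subst hst
                      fin_cases s
                      · exact h00 hbt
                      · exact h11 hbt
                      · exact h22 hbt
                      · exact h33 hbt
                    · by_contra hnin
                      fin_cases s <;> fin_cases t <;>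
                        first
                          | exact hst rfl
                          | exact hnin (by decide)
                          | exact h02 hbt | exact h20 hbt | exact h03 hbt
                          | exact h30 hbt | exact h13 hbt | exact h31 hbt
                  · intro hin
                    rcases hin with ⟨rfl, rfl⟩ | ⟨rfl, rfl⟩ | ⟨rfl, rfl⟩ |
                      ⟨rfl, rfl⟩ | ⟨rfl, rfl⟩ | ⟨rfl, rfl⟩
                    exacts [h01, h10, h12, h21, h23, h32]
                · intro i s t hst
                  exact ⟨fun ha => not_not.mp (fun hc => hwN i s t hst hc ha),
                    hwE i s t⟩
              · exact halfCase 2 3 (fun i => hwE i 2 3 (by decide)) h23 h32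
            · by_cases h32 : B 3 2 = true
              · exact halfCase 3 2 (fun i => hwE i 3 2 (by decide)) h32 h23
              · exact matchCase 2 3 (fun i => hwE i 2 3 (by decide)) (toF h23)
                  (toF h32) (toF h22) (toF h33)
          · exact halfCase 1 2 (fun i => hwE i 1 2 (by decide)) h12 h21
        · by_cases h21 : B 2 1 = true
          · exact halfCase 2 1 (fun i => hwE i 2 1 (by decide)) h21 h12
          · exact matchCase 1 2 (fun i => hwE i 1 2 (by decide)) (toF h12)
              (toF h21) (toF h11) (toF h22)
      · exact halfCase 0 1 (fun i => hwE i 0 1 (by decide)) h01 h10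
    · by_cases h10 : B 1 0 = true
      · exact halfCase 1 0 (fun i => hwE i 1 0 (by decide)) h10 h01
      · exact matchCase 0 1 (fun i => hwE i 0 1 (by decide)) (toF h01)
          (toF h10) (toF h00) (toF h11)
  · -- 2K2 type
    have hpat : ∀ i : Fin (K + 1), Obs2K2 G (W i 0) (W i 1) (W i 2) (W i 3) := by
      intro i
      rcases hwobs i with ⟨htyi, -⟩ | ⟨htyi, -⟩ | ⟨-, h2⟩
      · rw [htyEq i, hty0] at htyi
        exact absurd htyi (by decide)
      · rw [htyEq i, hty0] at htyi
        exact absurd htyi (by decide)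
      · exact h2
    have hwd : ∀ i, ∀ s t : Fin 4, s ≠ t → W i s ≠ W i t := by
      intro i s t hst
      obtain ⟨d1, d2, d3, d4, d5, d6⟩ := (hpat i).distinct
      fin_cases s <;> fin_cases t <;>
        first
          | exact absurd rfl hst
          | exact d1 | exact d2 | exact d3 | exact d4 | exact d5 | exact d6
          | exact d1.symm | exact d2.symm | exact d3.symm | exact d4.symm
          | exact d5.symm | exact d6.symm
    have hwE : ∀ i (s t : Fin 4), inE s t → G.Adj (W i s) (W i t) := by
      intro i s t hin
      obtain ⟨a1, a2, -, -, -, -⟩ := hpat i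
      rcases hin with ⟨rfl, rfl⟩ | ⟨rfl, rfl⟩ | ⟨rfl, rfl⟩ | ⟨rfl, rfl⟩
      · exact a1
      · exact a1.symm
      · exact a2
      · exact a2.symm
    have hwN : ∀ i (s t : Fin 4), s ≠ t → ¬ inE s t → ¬ G.Adj (W i s) (W i t) := by
      intro i s t hst hnin
      obtain ⟨-, -, n1, n2, n3, n4⟩ := hpat i
      fin_cases s <;> fin_cases t <;>
        first
          | exact absurd rfl hst
          | exact absurd (by decide) hnin
          | exact n1 | exact n2 | exact n3 | exact n4
          | exact fun h => n1 h.symm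
          | exact fun h => n2 h.symm
          | exact fun h => n3 h.symm
          | exact fun h => n4 h.symm
    by_cases h00 : B 0 0 = true
    · exact diagCase 0 h00
    by_cases h11 : B 1 1 = true
    · exact diagCase 1 h11
    by_cases h22 : B 2 2 = true
    · exact diagCase 2 h22
    by_cases h33 : B 3 3 = true
    · exact diagCase 3 h33
    by_cases h02 : B 0 2 = true
    · exact pairCase 0 2 (fun i => hwd i 0 2 (by decide))
        (fun i => hwN i 0 2 (by decide) (by decide)) h02
    by_cases h20 : B 2 0 = true
    · exact pairCase 2 0 (fun i => hwd i 2 0 (by decide))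
        (fun i => hwN i 2 0 (by decide) (by decide)) h20
    by_cases h03 : B 0 3 = true
    · exact pairCase 0 3 (fun i => hwd i 0 3 (by decide))
        (fun i => hwN i 0 3 (by decide) (by decide)) h03
    by_cases h30 : B 3 0 = true
    · exact pairCase 3 0 (fun i => hwd i 3 0 (by decide))
        (fun i => hwN i 3 0 (by decide) (by decide)) h30
    by_cases h12 : B 1 2 = true
    · exact pairCase 1 2 (fun i => hwd i 1 2 (by decide))
        (fun i => hwN i 1 2 (by decide) (by decide)) h12
    by_cases h21 : B 2 1 = true
    · exact pairCase 2 1 (fun i => hwd i 2 1 (by decide))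
        (fun i => hwN i 2 1 (by decide) (by decide)) h21
    by_cases h13 : B 1 3 = true
    · exact pairCase 1 3 (fun i => hwd i 1 3 (by decide))
        (fun i => hwN i 1 3 (by decide) (by decide)) h13
    by_cases h31 : B 3 1 = true
    · exact pairCase 3 1 (fun i => hwd i 3 1 (by decide))
        (fun i => hwN i 3 1 (by decide) (by decide)) h31
    by_cases h01 : B 0 1 = true
    · by_cases h10 : B 1 0 = true
      · by_cases h23 : B 2 3 = true
        · by_cases h32 : B 3 2 = true
          · refine tripCase inE (by decide) ?_ ?_ hwd
              ![![0, 2], ![1, 3], ![1, 2]] (by decide) (by decide) (by decide)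
            · intro s t
              constructor
              · intro hbt
                by_cases hst : s = t
                · exfalso
                  subst hst
                  fin_cases s
                  · exact h00 hbt
                  · exact h11 hbt
                  · exact h22 hbt
                  · exact h33 hbt
                · by_contra hnin
                  fin_cases s <;> fin_cases t <;>
                    first
                      | exact hst rfl
                      | exact hnin (by decide)
                      | exact h02 hbt | exact h20 hbt | exact h03 hbt
                      | exact h30 hbt | exact h12 hbt | exact h21 hbt
                      | exact h13 hbt | exact h31 hbt
              · intro hin
                rcases hin with ⟨rfl, rfl⟩ | ⟨rfl, rfl⟩ | ⟨rfl, rfl⟩ | ⟨rfl, rfl⟩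
                exacts [h01, h10, h23, h32]
            · intro i s t hst
              exact ⟨fun ha => not_not.mp (fun hc => hwN i s t hst hc ha),
                hwE i s t⟩
          · exact halfCase 2 3 (fun i => hwE i 2 3 (by decide)) h23 h32
        · by_cases h32 : B 3 2 = true
          · exact halfCase 3 2 (fun i => hwE i 3 2 (by decide)) h32 h23
          · exact matchCase 2 3 (fun i => hwE i 2 3 (by decide)) (toF h23)
              (toF h32) (toF h22) (toF h33)
      · exact halfCase 0 1 (fun i => hwE i 0 1 (by decide)) h01 h10
    · by_cases h10 : B 1 0 = true
      · exact halfCase 1 0 (fun i => hwE i 1 0 (by decide)) h10 h01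
      · exact matchCase 0 1 (fun i => hwE i 0 1 (by decide)) (toF h01)
          (toF h10) (toF h00) (toF h11)
end

section
/- If C is a graph embedded in a surface of Euler genus g such that each connected component either has minimum degree at least 3 or consists of a single vertex with a loop, then |V(C)| ≤ 2|F(C)| + 4g, where F(C) is the set of faces of the embedding. -/
/-- The setoid on the underlying type of a permutation whose classes are the cycles
(orbits) of the permutation. -/
def sameCycleSetoid {D : Type*} (f : Equiv.Perm D) : Setoid D :=
  ⟨f.SameCycle, ⟨fun x => Equiv.Perm.SameCycle.refl f x, fun h => h.symm, fun h h' => h.trans h'⟩⟩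

/-- The number of cycles (orbits) of a permutation. -/
noncomputable def cycleCount {D : Type*} (f : Equiv.Perm D) : ℕ :=
  Nat.card (Quotient (sameCycleSetoid f))

/-- A combinatorial map (cellular embedding of a multigraph, possibly with loops, in a
surface), given by a finite set of darts `D`, the rotation `σ` (cyclic order of darts
around each vertex) and the fixed-point-free involution `α` pairing the two darts of
each edge.  Vertices are the orbits of `σ`, edges the orbits of `α`, faces the orbits
of `σ * α`. -/
structure CombMap where
  D : Type
  [fintypeD : Fintype D]
  σ : Equiv.Perm D
  α : Equiv.Perm D
  involutive : ∀ d, α (α d) = d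
  fixedfree : ∀ d, α d ≠ d

attribute [instance] CombMap.fintypeD

namespace CombMap

/-- The number of vertices of a combinatorial map. -/
noncomputable def numVertices (M : CombMap) : ℕ := cycleCount M.σ

/-- The number of edges of a combinatorial map. -/
noncomputable def numEdges (M : CombMap) : ℕ := cycleCount M.α

/-- The number of faces of a combinatorial map. -/
noncomputable def numFaces (M : CombMap) : ℕ := cycleCount (M.σ * M.α)

/-- Darts in the same connected component: the equivalence generated by `σ` and `α`. -/
def componentSetoid (M : CombMap) : Setoid M.D :=
  Relation.EqvGen.setoid (fun d d' => M.σ d = d' ∨ M.α d = d')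

/-- The number of connected components of a combinatorial map. -/
noncomputable def numComponents (M : CombMap) : ℕ := Nat.card (Quotient M.componentSetoid)

/-- `M` is an embedding in a surface of Euler genus at most `g`:
the total Euler genus `2c - (V - E + F)` of the map is at most `g`. -/
def GenusLE (M : CombMap) (g : ℕ) : Prop :=
  2 * (M.numComponents : ℤ) - ((M.numVertices : ℤ) - (M.numEdges : ℤ) + (M.numFaces : ℤ)) ≤ g

/-- The vertices of a combinatorial map. -/
def Vertex (M : CombMap) : Type := Quotient (sameCycleSetoid M.σ)

/-- The vertex at which a dart is based. -/
def vtx (M : CombMap) (d : M.D) : M.Vertex := Quotient.mk (sameCycleSetoid M.σ) d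

/-- The underlying simple graph of a combinatorial map: two distinct vertices are
adjacent iff some edge joins them. -/
def graph (M : CombMap) : SimpleGraph M.Vertex where
  Adj u v := u ≠ v ∧ ∃ d : M.D, M.vtx d = u ∧ M.vtx (M.α d) = v
  symm := ⟨by
    rintro u v ⟨hne, d, hd, hd'⟩
    exact ⟨hne.symm, M.α d, hd', by rw [M.involutive d]; exact hd⟩⟩
  loopless := ⟨fun u h => h.1 rfl⟩

end CombMap

section Helpers

lemma two_orbit {X : Type*} (f : Equiv.Perm X) (d e : X) (h1 : f d = e) (h2 : f e = d) :
    ∀ n : ℤ, (f ^ n) d = d ∨ (f ^ n) d = e := by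
  intro n
  induction n using Int.induction_on with
  | zero => left; simp
  | succ k ih =>
    rw [zpow_natCast] at ih
    rcases ih with h | h <;> rw [add_comm, zpow_add, Equiv.Perm.mul_apply, zpow_one, zpow_natCast] <;>
      simp [h, h1, h2]
  | pred k ih =>
    have e1 : f⁻¹ d = e := by rw [Equiv.Perm.inv_eq_iff_eq]; exact h2.symm
    have e2 : f⁻¹ e = d := by rw [Equiv.Perm.inv_eq_iff_eq]; exact h1.symm
    rcases ih with h | h <;> rw [sub_eq_add_neg, add_comm, zpow_add, Equiv.Perm.mul_apply] <;>
      simp [zpow_neg, zpow_natCast] at h ⊢ <;> simp only [Equiv.Perm.inv_def] at e1 e2 <;> simp [h, e1, e2]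

lemma sameCycle_two {X : Type*} {f : Equiv.Perm X} {d e x : X} (h1 : f d = e) (h2 : f e = d)
    (h : f.SameCycle d x) : x = d ∨ x = e := by
  obtain ⟨n, hn⟩ := h
  rcases two_orbit f d e h1 h2 n with h | h <;> [left; right] <;> rw [← hn, h]

namespace CombMap

variable (M : CombMap)

/-- A dart whose vertex is a single vertex with a loop. -/
def Loopy (d : M.D) : Prop := M.σ d = M.α d ∧ M.σ (M.α d) = d

variable {M}

lemma Loopy.alpha {d : M.D} (h : M.Loopy d) : M.Loopy (M.α d) :=
  ⟨by rw [h.2, M.involutive], by rw [M.involutive, h.1]⟩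

lemma Loopy.sameCycle {d x : M.D} (h : M.Loopy d) (hx : M.σ.SameCycle d x) :
    x = d ∨ x = M.α d := sameCycle_two h.1 h.2 hx

lemma loopy_iff_of_sameCycle {d d' : M.D} (h : M.σ.SameCycle d d') :
    M.Loopy d ↔ M.Loopy d' := by
  constructor
  · intro hd
    rcases hd.sameCycle h with rfl | rfl
    · exact hd
    · exact hd.alpha
  · intro hd'
    rcases hd'.sameCycle h.symm with rfl | rfl
    · exact hd'
    · exact hd'.alpha

variable (M)

/-- Whether a vertex is a single vertex with a loop. -/
def loopyV : M.Vertex → Prop :=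
  Quotient.lift M.Loopy (fun _ _ h => propext (loopy_iff_of_sameCycle h))

lemma loopyV_mk (d : M.D) : M.loopyV (M.vtx d) = M.Loopy d := rfl

end CombMap

end Helpers

namespace CombMap

/-- The step relation generating components. -/
def crel (M : CombMap) : M.D → M.D → Prop := fun d d' => M.σ d = d' ∨ M.α d = d'

lemma comp_rel_of_sameCycle (M : CombMap) {a b : M.D} (h : M.σ.SameCycle a b) :
    Relation.EqvGen M.crel a b := by
  obtain ⟨n, hn⟩ := h
  subst hn
  induction n using Int.induction_on with
  | zero => simpa using Relation.EqvGen.refl a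
  | succ k ih =>
    refine Relation.EqvGen.trans _ _ _ ih (Relation.EqvGen.rel _ _ (Or.inl ?_))
    rw [← Equiv.Perm.mul_apply, ← zpow_one_add]
    ring_nf
  | pred k ih =>
    refine Relation.EqvGen.trans _ _ _ ih
      (Relation.EqvGen.symm _ _ (Relation.EqvGen.rel _ _ (Or.inl ?_)))
    rw [← Equiv.Perm.mul_apply, ← zpow_one_add]
    ring_nf

lemma loopy_component {M : CombMap} {d x : M.D} (hd : M.Loopy d)
    (h : Relation.EqvGen M.crel d x) : x = d ∨ x = M.α d := by
  set P : M.D → Prop := fun y => y = d ∨ y = M.α d with hP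
  have hr : ∀ a c, M.crel a c → (P a ↔ P c) := by
    intro a c hac
    rcases hac with h' | h' <;> constructor
    · rintro (ha | ha)
      · right; rw [← h', ha, hd.1]
      · left; rw [← h', ha, hd.2]
    · rintro (hc | hc)
      · right; apply M.σ.injective; rw [h', hc, hd.2]
      · left; apply M.σ.injective; rw [h', hc, hd.1]
    · rintro (ha | ha)
      · right; rw [← h', ha]
      · left; rw [← h', ha, M.involutive]
    · rintro (hc | hc)
      · right; apply M.α.injective; rw [h', hc, M.involutive]
      · left; apply M.α.injective; rw [h', hc]
  have key : ∀ x y, Relation.EqvGen M.crel x y → (P x ↔ P y) := by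
    intro x y h
    induction h with
    | rel a b hab => exact hr a b hab
    | refl => exact Iff.rfl
    | symm a b _ ih => exact ih.symm
    | trans a b c _ _ ih1 ih2 => exact ih1.trans ih2
  exact (key d x h).mp (Or.inl rfl)

/-- Map from loopy vertices to components. -/
def loopyToComp (M : CombMap) :
    {q : Quotient (sameCycleSetoid M.σ) // M.loopyV q} → Quotient M.componentSetoid :=
  fun q => Quotient.liftOn q.1 (fun d => Quotient.mk M.componentSetoid d)
    (fun _ _ h => Quotient.sound (M.comp_rel_of_sameCycle h))

end CombMap

/-- If `C` is a graph embedded in a surface of Euler genus `g` such that each connected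
component either has minimum degree at least 3 or consists of a single vertex with a
loop, then `|V(C)| ≤ 2|F(C)| + 4g`.  (A vertex has degree at least 3 iff for each of
its darts `d`, `σ d ≠ d` and `σ (σ d) ≠ d`; a single vertex with a loop is a component
with two darts `d, α d` forming one `σ`-cycle.) -/
theorem stmt13 (M : CombMap) (g : ℕ) (hg : M.GenusLE g)
    (hdeg : ∀ d : M.D,
      (M.σ d ≠ d ∧ M.σ (M.σ d) ≠ d) ∨ (M.σ d = M.α d ∧ M.σ (M.α d) = d)) :
    M.numVertices ≤ 2 * M.numFaces + 4 * g := by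
  classical
  -- edge count
  have hE : Fintype.card M.D = 2 * M.numEdges := by
    have hfib := Finset.card_eq_sum_card_fiberwise
      (f := fun d => Quotient.mk (sameCycleSetoid M.α) d) (s := Finset.univ) (t := Finset.univ)
      (fun x _ => Finset.mem_univ _)
    have fiber2 : ∀ q : Quotient (sameCycleSetoid M.α),
        (Finset.univ.filter (fun x => Quotient.mk (sameCycleSetoid M.α) x = q)).card = 2 := by
      intro q
      obtain ⟨d, rfl⟩ := q.exists_rep
      have hset : (Finset.univ.filter
          (fun x => Quotient.mk (sameCycleSetoid M.α) x = Quotient.mk (sameCycleSetoid M.α) d))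
          = {d, M.α d} := by
        ext x
        simp only [Finset.mem_filter, Finset.mem_univ, true_and, Finset.mem_insert,
          Finset.mem_singleton, Quotient.eq]
        constructor
        · intro h
          exact sameCycle_two rfl (M.involutive d) (Equiv.Perm.SameCycle.symm h)
        · rintro (rfl | rfl)
          · exact Equiv.Perm.SameCycle.refl _ _
          · exact Equiv.Perm.SameCycle.symm ⟨1, by simp⟩
      rw [hset, Finset.card_pair (Ne.symm (M.fixedfree d))]
    rw [show Fintype.card M.D = Finset.univ.card from rfl, hfib]
    simp only [fiber2, Finset.sum_const, Finset.card_univ, smul_eq_mul]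
    simp only [CombMap.numEdges, cycleCount, Nat.card_eq_fintype_card]
    ring
  -- loopy vertices
  set b := (Finset.univ.filter
    (fun q : Quotient (sameCycleSetoid M.σ) => M.loopyV q)).card with hb
  -- vertex count
  have hV : 3 * Fintype.card (Quotient (sameCycleSetoid M.σ)) ≤ Fintype.card M.D + b := by
    have hfib := Finset.card_eq_sum_card_fiberwise
      (f := fun d => Quotient.mk (sameCycleSetoid M.σ) d) (s := Finset.univ) (t := Finset.univ)
      (fun x _ => Finset.mem_univ _)
    have fiber_ge : ∀ q : Quotient (sameCycleSetoid M.σ),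
        (if M.loopyV q then 2 else 3) ≤
          (Finset.univ.filter (fun x => Quotient.mk (sameCycleSetoid M.σ) x = q)).card := by
      intro q
      obtain ⟨d, rfl⟩ := q.exists_rep
      have hlv : M.loopyV (Quotient.mk (sameCycleSetoid M.σ) d) = M.Loopy d := rfl
      rw [hlv]
      by_cases hl : M.Loopy d
      · rw [if_pos hl]
        have hsub : ({d, M.α d} : Finset M.D) ⊆
            Finset.univ.filter
              (fun x => Quotient.mk (sameCycleSetoid M.σ) x = Quotient.mk (sameCycleSetoid M.σ) d) := by
          intro x hx
          simp only [Finset.mem_insert, Finset.mem_singleton] at hx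
          simp only [Finset.mem_filter, Finset.mem_univ, true_and]
          rcases hx with rfl | rfl
          · rfl
          · exact Quotient.sound (Equiv.Perm.SameCycle.symm ⟨1, hl.1⟩)
        calc (2 : ℕ) = ({d, M.α d} : Finset M.D).card :=
              (Finset.card_pair (Ne.symm (M.fixedfree d))).symm
          _ ≤ _ := Finset.card_le_card hsub
      · rw [if_neg hl]
        obtain ⟨h1, h2⟩ := (hdeg d).resolve_right hl
        have hsub : ({d, M.σ d, M.σ (M.σ d)} : Finset M.D) ⊆
            Finset.univ.filter
              (fun x => Quotient.mk (sameCycleSetoid M.σ) x = Quotient.mk (sameCycleSetoid M.σ) d) := by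
          intro x hx
          simp only [Finset.mem_insert, Finset.mem_singleton] at hx
          simp only [Finset.mem_filter, Finset.mem_univ, true_and]
          rcases hx with rfl | rfl | rfl
          · rfl
          · exact Quotient.sound (Equiv.Perm.SameCycle.symm ⟨1, rfl⟩)
          · exact Quotient.sound (Equiv.Perm.SameCycle.symm ⟨2, by
              rw [show (2:ℤ) = 1 + 1 from rfl, zpow_add, zpow_one, Equiv.Perm.mul_apply]⟩)
        have hcard3 : ({d, M.σ d, M.σ (M.σ d)} : Finset M.D).card = 3 := by
          rw [Finset.card_insert_of_notMem, Finset.card_pair]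
          · intro hc; exact h1 (M.σ.injective hc).symm
          · simp only [Finset.mem_insert, Finset.mem_singleton]
            rintro (hc | hc)
            · exact h1 hc.symm
            · exact h2 hc.symm
        calc (3 : ℕ) = ({d, M.σ d, M.σ (M.σ d)} : Finset M.D).card := hcard3.symm
          _ ≤ _ := Finset.card_le_card hsub
    have hsum : (∑ q : Quotient (sameCycleSetoid M.σ), (if M.loopyV q then 2 else 3))
        ≤ Fintype.card M.D := by
      rw [show Fintype.card M.D = Finset.univ.card from rfl, hfib]
      exact Finset.sum_le_sum (fun q _ => fiber_ge q)
    have hsplit : (∑ q : Quotient (sameCycleSetoid M.σ), (if M.loopyV q then 2 else 3))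
        = 2 * b + 3 * (Finset.univ.filter
            (fun q : Quotient (sameCycleSetoid M.σ) => ¬ M.loopyV q)).card := by
      rw [hb]
      exact (@Finset.sum_ite _ _ _ _ _ (fun _ => Classical.propDecidable _)
        (fun _ => 2) (fun _ => 3)).trans (by
          simp only [Finset.sum_const, smul_eq_mul]
          exact congrArg₂ (· + ·) (Nat.mul_comm _ _) ((Nat.mul_comm _ _).trans (by congr!)))
    have hcards : b + (Finset.univ.filter
        (fun q : Quotient (sameCycleSetoid M.σ) => ¬ M.loopyV q)).card
        = Fintype.card (Quotient (sameCycleSetoid M.σ)) := by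
      rw [hb, Finset.card_filter_add_card_filter_not, Finset.card_univ]
    omega
  -- components
  have hcomp : b ≤ M.numComponents := by
    have hb' : b = Nat.card {q : Quotient (sameCycleSetoid M.σ) // M.loopyV q} := by
      rw [hb, ← Nat.card_eq_finsetCard]
      exact Nat.card_congr (Equiv.subtypeEquivRight
        (fun x => Finset.mem_filter.trans (and_iff_right (Finset.mem_univ x))))
    rw [hb']
    have finj : Function.Injective (CombMap.loopyToComp M) := by
      rintro ⟨q1, h1⟩ ⟨q2, h2⟩ heq
      simp only [CombMap.loopyToComp] at heq
      obtain ⟨d1, rfl⟩ := q1.exists_rep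
      obtain ⟨d2, rfl⟩ := q2.exists_rep
      have hl1 : M.Loopy d1 := h1
      have hcc : Relation.EqvGen M.crel d1 d2 := Quotient.exact heq
      apply Subtype.ext
      rcases CombMap.loopy_component hl1 hcc with rfl | rfl
      · rfl
      · have hsc : M.σ.SameCycle d1 (M.α d1) := ⟨1, by simpa using hl1.1⟩
        exact Quotient.sound hsc
    exact Nat.card_le_card_of_injective _ finj
  -- conclude
  have hV' : M.numVertices = Fintype.card (Quotient (sameCycleSetoid M.σ)) := by
    simp only [CombMap.numVertices, cycleCount, Nat.card_eq_fintype_card]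
  rw [CombMap.GenusLE] at hg
  omega
end

section
/- In the grid gadget G_S, every path between the corners DL and UR contains a vertex of the diagonal path; consequently, if a good cut M of G_S places every vertex of the diagonal path in the component of UL or of DR, then M also separates DL from UR (i.e., M is a 4-corner cut). -/
/-- The `(N+1) × (N+1)` grid graph with vertices `g[i,j]`. -/
def gridGraph (N : ℕ) : SimpleGraph (Fin (N + 1) × Fin (N + 1)) where
  Adj p q := (p.1 = q.1 ∧ (p.2.val + 1 = q.2.val ∨ q.2.val + 1 = p.2.val)) ∨
             (p.2 = q.2 ∧ (p.1.val + 1 = q.1.val ∨ q.1.val + 1 = p.1.val))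
  symm := by
    constructor
    rintro p q (⟨h, h'⟩ | ⟨h, h'⟩)
    · exact Or.inl ⟨h.symm, h'.symm⟩
    · exact Or.inr ⟨h.symm, h'.symm⟩
  loopless := by constructor; rintro p (⟨-, h | h⟩ | ⟨-, h | h⟩) <;> omega

/-- The vertices of the diagonal path `g[0,0], g[0,1], g[1,1], g[1,2], …,
g[N-1,N-1], g[N-1,N], g[N,N]`. -/
def diagSet (N : ℕ) : Set (Fin (N + 1) × Fin (N + 1)) :=
  {p | p.2.val = p.1.val ∨ p.2.val = p.1.val + 1}

private def fz {N : ℕ} (p : Fin (N + 1) × Fin (N + 1)) : ℤ :=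
  (p.2.val : ℤ) - (p.1.val : ℤ)

private lemma adj_fz {N : ℕ} {p q : Fin (N + 1) × Fin (N + 1)}
    (h : (gridGraph N).Adj p q) : fz q = fz p + 1 ∨ fz q = fz p - 1 := by
  rcases h with ⟨h1, h2⟩ | ⟨h1, h2⟩ <;> rw [Fin.ext_iff] at h1 <;>
    simp only [fz] <;> omega

private lemma mem_diag {N : ℕ} {p : Fin (N + 1) × Fin (N + 1)}
    (h : fz p = 0 ∨ fz p = 1) : p ∈ diagSet N := by
  simp only [fz] at h
  simp only [diagSet, Set.mem_setOf_eq]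
  omega

private lemma walk_hits {N : ℕ} {G : SimpleGraph (Fin (N + 1) × Fin (N + 1))}
    (hG : G ≤ gridGraph N) :
    ∀ {u v : Fin (N + 1) × Fin (N + 1)} (w : G.Walk u v), fz u ≤ 0 → 1 ≤ fz v →
      ∃ p ∈ w.support, p ∈ diagSet N := by
  intro u v w
  induction w with
  | nil => intro h1 h2; omega
  | @cons a b c h w ih =>
    intro h1 h2
    by_cases ha : fz a = 0
    · exact ⟨a, by simp, mem_diag (Or.inl ha)⟩
    · have hb : fz b ≤ 0 := by rcases adj_fz (hG h) with h' | h' <;> omega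
      obtain ⟨p, hp, hpd⟩ := ih hb h2
      exact ⟨p, by simp [hp], hpd⟩

/-- In the grid underlying the grid gadget `G_S` (with corners `UL = g[0,0]`,
`UR = g[0,N]`, `DL = g[N,0]`, `DR = g[N,N]`): every path between the corners `DL` and
`UR` contains a vertex of the diagonal path; consequently, if a good cut `M` (an edge
set such that the components of `G_S − M` containing `UL` or `DR` contain no other
corner) places every vertex of the diagonal path in the component of `UL` or of `DR`,
then `M` also separates `DL` from `UR`, i.e. `M` is a 4-corner cut. -/
theorem stmt19 (N : ℕ) (hN : 1 ≤ N) :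
    (∀ w : (gridGraph N).Walk (Fin.last N, 0) (0, Fin.last N),
      ∃ v ∈ w.support, v ∈ diagSet N) ∧
    (∀ M : Set (Sym2 (Fin (N + 1) × Fin (N + 1))),
      (∀ v ∈ diagSet N,
        ((gridGraph N).deleteEdges M).Reachable (0, 0) v ∨
        ((gridGraph N).deleteEdges M).Reachable (Fin.last N, Fin.last N) v) →
      ¬ ((gridGraph N).deleteEdges M).Reachable (0, 0) (0, Fin.last N) →
      ¬ ((gridGraph N).deleteEdges M).Reachable (0, 0) (Fin.last N, 0) →
      ¬ ((gridGraph N).deleteEdges M).Reachable (0, 0) (Fin.last N, Fin.last N) →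
      ¬ ((gridGraph N).deleteEdges M).Reachable (Fin.last N, Fin.last N) (0, Fin.last N) →
      ¬ ((gridGraph N).deleteEdges M).Reachable (Fin.last N, Fin.last N) (Fin.last N, 0) →
      ¬ ((gridGraph N).deleteEdges M).Reachable (Fin.last N, 0) (0, Fin.last N)) := by
  have part1 : ∀ {G : SimpleGraph (Fin (N + 1) × Fin (N + 1))}, G ≤ gridGraph N →
      ∀ w : G.Walk (Fin.last N, 0) (0, Fin.last N),
      ∃ v ∈ w.support, v ∈ diagSet N := by
    intro G hG w
    refine walk_hits hG w ?_ ?_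
    · simp [fz]
    · simp only [fz, Fin.val_last, Fin.val_zero]
      omega
  refine ⟨part1 le_rfl, ?_⟩
  intro M hdiag h1 h2 h3 h4 h5 hreach
  obtain ⟨w⟩ := hreach
  obtain ⟨v, hv, hvd⟩ := part1 (SimpleGraph.deleteEdges_le M) w
  have hDLv : ((gridGraph N).deleteEdges M).Reachable (Fin.last N, 0) v :=
    ⟨w.takeUntil v hv⟩
  rcases hdiag v hvd with hUL | hDR
  · exact h2 (hUL.trans hDLv.symm)
  · exact h5 (hDR.trans hDLv.symm)
end
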